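/- arXiv:2301.10113 — 2 statements merged into one kernel-verified Lean document; each statement's English description precedes it below -/
import Mathlib

section
/- Let (Z_v) with approximating fields (Z_v^t) satisfy Assumption 2 and let γ > α be given. Then: (1) there exist c > 0 and x_0 > 0 such that P(yZ_0 > x)/P(Z_0 > x) ≤ c(|y|^γ + 1{|y|≤1}) for all x ≥ x_0 and all y ∈ ℝ; (2) for every t ∈ ℕ there exists c_t > 0 such that P(yZ_0^t > x)/P(Z_0 > x) ≤ c_t(|y|^γ + 1{|y|≤1}) for all x ≥ x_0 and all y ∈ ℝ; (3) for every t ∈ ℕ there exist constants K_t with K_t ↓ 0 as t → ∞ and x_t > 0 such that max( P(yZ_0^t > x, yZ_0 ≤ x), P(yZ_0 > x, yZ_0^t ≤ x) ) / P(Z_0 > x) ≤ K_t(|y|^γ + 1{|y|≤1}) for all x ≥ x_t and all |y| ≤ x/x_t. -/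
open MeasureTheory Filter Real

namespace SVF

/-- Index lattice `ℤ^d`. -/
abbrev V (d : ℕ) := Fin d → ℤ

/-- Path space `ℝ^{ℤ^d}`. -/
abbrev Path (d : ℕ) := V d → ℝ

variable {d : ℕ} {Ω : Type*}

/-- Translation of a path by `w`. -/
def shift (w : V d) (y : Path d) : Path d := fun v => y (v + w)

/-- The σ-algebra of translation-invariant measurable sets on the path space. -/
def invariants (d : ℕ) : MeasurableSpace (Path d) where
  MeasurableSet' A := MeasurableSet A ∧ ∀ w : V d, shift w ⁻¹' A = A
  measurableSet_empty := ⟨MeasurableSet.empty, fun _ => Set.preimage_empty⟩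
  measurableSet_compl A hA := ⟨hA.1.compl, fun w => by
    rw [Set.preimage_compl, hA.2 w]⟩
  measurableSet_iUnion f hf := ⟨MeasurableSet.iUnion fun i => (hf i).1, fun w => by
    simp only [Set.preimage_iUnion]
    exact Set.iUnion_congr fun i => (hf i).2 w⟩

/-- Law of a random field, as a measure on path space. -/
noncomputable def law [MeasurableSpace Ω] (Y : V d → Ω → ℝ) (ℙ : Measure Ω) :
    Measure (Path d) :=
  Measure.map (fun ω v => Y v ω) ℙ

/-- `(y)_+^a` (positive part to a real power). -/
noncomputable def pPow (y a : ℝ) : ℝ := (max y 0) ^ a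

/-- `(y)_-^a` (negative part to a real power). -/
noncomputable def nPow (y a : ℝ) : ℝ := (max (-y) 0) ^ a

/-- Truncation `f^K(y) = y · 1{|y| ≤ K}`. -/
noncomputable def trunc (K : ℕ) (y : ℝ) : ℝ := if |y| ≤ K then y else 0

/-- Maximum of `f` over a (finite, nonempty) index set, implemented as `sSup` of the image. -/
noncomputable def fMax (s : Finset (V d)) (f : V d → ℝ) : ℝ := sSup (f '' (s : Set (V d)))

/-- The `J`-box index of a lattice point. -/
noncomputable def zOf (t : ℕ → Fin d → ℕ) (xs : ℕ → Fin d → ℝ) (n : ℕ) (v : V d) : V d :=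
  fun ℓ => ⌊(((v ℓ : ℝ)) - xs n ℓ) / (t n ℓ : ℝ)⌋

/-- The box `J_z^n = (x_n + t_n (z + [0,1)^d)) ∩ ℤ^d`. -/
noncomputable def Jbox (t : ℕ → Fin d → ℕ) (xs : ℕ → Fin d → ℝ) (n : ℕ) (z : V d) :
    Finset (V d) :=
  Finset.Icc (fun ℓ => ⌈xs n ℓ + (t n ℓ : ℝ) * z ℓ⌉)
    (fun ℓ => ⌈xs n ℓ + (t n ℓ : ℝ) * (z ℓ + 1)⌉ - 1)

open Classical in
/-- Indices `z` with `J_z^n ∩ D_n ≠ ∅`. -/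
noncomputable def Qidx (t : ℕ → Fin d → ℕ) (xs : ℕ → Fin d → ℝ) (D : ℕ → Finset (V d))
    (n : ℕ) : Finset (V d) :=
  (D n).image (zOf t xs n)

open Classical in
/-- Indices `z` with `J_z^n ⊆ D_n`. -/
noncomputable def Pidx (t : ℕ → Fin d → ℕ) (xs : ℕ → Fin d → ℝ) (D : ℕ → Finset (V d))
    (n : ℕ) : Finset (V d) :=
  (Qidx t xs D n).filter fun z => Jbox t xs n z ⊆ D n

/-- Inner approximation `D_n^-`. -/
noncomputable def Dminus (t : ℕ → Fin d → ℕ) (xs : ℕ → Fin d → ℝ) (D : ℕ → Finset (V d))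
    (n : ℕ) : Finset (V d) :=
  (Pidx t xs D n).biUnion (Jbox t xs n)

/-- Outer approximation `D_n^+`. -/
noncomputable def Dplus (t : ℕ → Fin d → ℕ) (xs : ℕ → Fin d → ℝ) (D : ℕ → Finset (V d))
    (n : ℕ) : Finset (V d) :=
  (Qidx t xs D n).biUnion (Jbox t xs n)

/-- A translation-invariant (strict) total order on `ℤ^d`. -/
structure TransOrder (d : ℕ) where
  prec : V d → V d → Prop
  trichotomy : ∀ u v, u = v ∨ prec u v ∨ prec v u
  irrefl : ∀ u, ¬ prec u u
  trans : ∀ u v w, prec u v → prec v w → prec u w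
  invariant : ∀ u v w, prec u v → prec (u + w) (v + w)

open Classical in
/-- `A_v^n = {z ∈ v + (t_n [-1,1]^d ∩ ℤ^d) : v ≺ z}`. -/
noncomputable def Aball (t : ℕ → Fin d → ℕ) (prec : V d → V d → Prop) (n : ℕ) (v : V d) :
    Finset (V d) :=
  (Finset.Icc (fun ℓ => v ℓ - (t n ℓ : ℤ)) fun ℓ => v ℓ + (t n ℓ : ℤ)).filter fun z => prec v z

open Classical in
/-- `A_v^{(m)} = {z ∈ v + ([-m,m]^d ∩ ℤ^d) : v ≺ z}`. -/
noncomputable def Am (prec : V d → V d → Prop) (m : ℕ) (v : V d) : Finset (V d) :=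
  (Finset.Icc (fun ℓ => v ℓ - (m : ℤ)) fun ℓ => v ℓ + (m : ℤ)).filter fun z => prec v z

/-- `B^{(m)} = [-m,m]^d ∩ ℤ^d`. -/
noncomputable def Bm (d m : ℕ) : Finset (V d) :=
  Finset.Icc (fun _ => -(m : ℤ)) fun _ => (m : ℤ)

/-- Assumption 1 of the paper, on the sequence of index sets. -/
structure IndexAssumption (D : ℕ → Finset (V d)) (t : ℕ → Fin d → ℕ)
    (xs : ℕ → Fin d → ℝ) : Prop where
  regular : ∃ c : ℝ, ∃ lo hi : ℕ → V d,
    (∀ n, D n ⊆ Finset.Icc (lo n) (hi n)) ∧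
    (∀ n, ((Finset.Icc (lo n) (hi n)).card : ℝ) ≤ c * ((D n).card : ℝ)) ∧
    (∀ v : V d, ∃ n, v ∈ Finset.Icc (lo n) (hi n))
  t_pos : ∀ n ℓ, 0 < t n ℓ
  t_tendsto : ∀ ℓ, Tendsto (fun n => t n ℓ) atTop atTop
  xs_pos : ∀ n ℓ, 0 < xs n ℓ
  xs_le : ∀ n ℓ, xs n ℓ ≤ (t n ℓ : ℝ)
  small : Tendsto (fun n => (∏ ℓ, (t n ℓ : ℝ)) / ((D n).card : ℝ)) atTop (nhds 0)
  approx : Tendsto (fun n =>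
      (((Dplus t xs D n).card : ℝ) - ((Dminus t xs D n).card : ℝ)) / ((D n).card : ℝ))
    atTop (nhds 0)

/-- Stationarity of a random field indexed by `ℤ^d`. -/
def Stationary [MeasurableSpace Ω] (R : V d → Ω → ℝ) (ℙ : Measure Ω) : Prop :=
  (∀ v, Measurable (R v)) ∧
  ∀ w : V d, Measure.map (fun ω => fun v => R (v + w) ω) ℙ =
    Measure.map (fun ω => fun v => R v ω) ℙ

/-- `‖R^m‖ = max_{v ∈ B^{(m)}} |R_v|`. -/
noncomputable def normRm (R : V d → Ω → ℝ) (m : ℕ) (ω : Ω) : ℝ :=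
  fMax (Bm d m) fun v => |R v ω|

/-- Joint regular variation of the field `R` of index `α`, with given spectral fields
`Θ m` for the restrictions to the boxes `B^{(m)}`. -/
def RegVarWith [MeasurableSpace Ω] (R : V d → Ω → ℝ) (α : ℝ) (Θ : ℕ → Ω → V d → ℝ)
    (ℙ : Measure Ω) : Prop :=
  ∀ m : ℕ,
    (∀ v, Measurable fun ω => Θ m ω v) ∧
    (∀ᵐ ω ∂ℙ, fMax (Bm d m) (fun v => |Θ m ω v|) = 1) ∧
    (∀ x : ℝ, 0 < x → ∀ f : Path d → ℝ, Continuous f → (∃ Cf, ∀ y, |f y| ≤ Cf) →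
      (∀ y y' : Path d, (∀ v ∈ Bm d m, y v = y' v) → f y = f y') →
      Tendsto (fun s : ℝ =>
          (∫ ω, Set.indicator {ω' : Ω | x * s < normRm R m ω'}
              (fun ω' => f fun v => R v ω' / normRm R m ω') ω ∂ℙ) /
            (ℙ {ω | s < normRm R m ω}).toReal)
        atTop (nhds (x ^ (-α) * ∫ ω, f (Θ m ω) ∂ℙ)))

/-- σ-algebra generated by the variables `R_v`, `v ∈ A`. -/
def sigmaOf [MeasurableSpace Ω] (R : V d → Ω → ℝ) (A : Set (V d)) : MeasurableSpace Ω :=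
  ⨆ v ∈ A, MeasurableSpace.comap (R v) inferInstance

/-- Two sets of indices are `h`-separated. -/
def hSep (A B : Set (V d)) (h : Fin d → ℝ) : Prop :=
  ∀ a ∈ A, ∀ b ∈ B, ∀ ℓ, h ℓ < |((b ℓ : ℝ) - (a ℓ : ℝ))|

/-- Strong (α-) mixing of the field `R` with mixing parameters `αmix`. -/
def StrongMixingWith [MeasurableSpace Ω] (R : V d → Ω → ℝ) (αmix : (Fin d → ℝ) → ℝ)
    (ℙ : Measure Ω) : Prop :=
  (∀ A B : Set (V d), ∀ h : Fin d → ℝ, (∀ ℓ, 0 < h ℓ) → hSep A B h →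
    ∀ S T : Set Ω, MeasurableSet[sigmaOf R A] S → MeasurableSet[sigmaOf R B] T →
      |(ℙ (S ∩ T)).toReal - (ℙ S).toReal * (ℙ T).toReal| ≤ αmix h) ∧
  (∀ ε : ℝ, 0 < ε → ∃ M : ℝ, ∀ h : Fin d → ℝ, (∀ ℓ, M ≤ h ℓ) → αmix h ≤ ε)

/-- The part of Assumption 2 of the paper concerning the fields `Z` and `Z^t`
(the latter with spectral fields `Θ t`), relative to a geometry with box scalings `t`
and index sets of size `Dcard n`. -/
structure ZAssumption [MeasurableSpace Ω] (ℙ : Measure Ω) (Dcard : ℕ → ℝ)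
    (t : ℕ → Fin d → ℕ) (ord : TransOrder d) (Z : V d → Ω → ℝ)
    (Zt : ℕ → V d → Ω → ℝ) (Θ : ℕ → ℕ → Ω → V d → ℝ) (α p : ℝ) : Prop where
  alpha_pos : 0 < α
  p_mem : p ∈ Set.Ioc (0 : ℝ) 1
  Zstat : Stationary Z ℙ
  tail_balance : Tendsto (fun x : ℝ =>
      (ℙ {ω | Z 0 ω < -x}).toReal / (ℙ {ω | x < Z 0 ω}).toReal) atTop (nhds ((1 - p) / p))
  Ztstat : ∀ s, Stationary (Zt s) ℙ
  regvar : ∀ s, RegVarWith (Zt s) α (Θ s) ℙ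
  mixing : ∀ s : ℕ, ∃ αmix : (Fin d → ℝ) → ℝ, ∃ γ : ℕ → Fin d → ℝ,
      StrongMixingWith (Zt s) αmix ℙ ∧
      (∀ ℓ, Tendsto (fun n => γ n ℓ) atTop atTop) ∧
      (∀ ℓ, Tendsto (fun n => γ n ℓ / (t n ℓ : ℝ)) atTop (nhds 0)) ∧
      Tendsto (fun n => αmix (γ n) * Dcard n / ∏ ℓ, (t n ℓ : ℝ)) atTop (nhds 0)
  anticluster : ∀ s : ℕ, ∀ a' : ℕ → ℝ,
      Tendsto (fun n => Dcard n * (ℙ {ω | a' n < Zt s 0 ω}).toReal) atTop (nhds 1) →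
      ∀ c : ℝ, 0 < c →
        Tendsto (fun m => Filter.limsup (fun n =>
            (ℙ {ω | (∃ v ∈ Aball t ord.prec n 0 \ Am ord.prec m 0,
                  c * a' n < |Zt s v ω|) ∧ c * a' n < |Zt s 0 ω|}).toReal /
              (ℙ {ω | c * a' n < |Zt s 0 ω|}).toReal) atTop) atTop (nhds 0)
  tails : ∃ Cp Cm : ℕ → ℝ,
      (∀ s, 0 < Cp s ∧ 0 < Cm s ∧
        Tendsto (fun x : ℝ =>
          (ℙ {ω | x < Zt s 0 ω}).toReal / (ℙ {ω | x < Z 0 ω}).toReal) atTop (nhds (Cp s)) ∧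
        Tendsto (fun x : ℝ =>
          (ℙ {ω | Zt s 0 ω < -x}).toReal / (ℙ {ω | Z 0 ω < -x}).toReal) atTop (nhds (Cm s))) ∧
      Tendsto Cp atTop (nhds 1) ∧ Tendsto Cm atTop (nhds 1)
  joint_pos : Filter.liminf (fun s : ℕ => Filter.liminf (fun x : ℝ =>
      (ℙ {ω | x < Zt s 0 ω ∧ x < Z 0 ω}).toReal / (ℙ {ω | x < Z 0 ω}).toReal) atTop) atTop = 1
  joint_neg : Filter.liminf (fun s : ℕ => Filter.liminf (fun x : ℝ =>
      (ℙ {ω | Zt s 0 ω < -x ∧ Z 0 ω < -x}).toReal / (ℙ {ω | Z 0 ω < -x}).toReal) atTop) atTop = 1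

/-- The part of Assumption 2 of the paper concerning the field `Y`. -/
structure YAssumption [MeasurableSpace Ω] (ℙ : Measure Ω) (Y Z : V d → Ω → ℝ)
    (Zt : ℕ → V d → Ω → ℝ) (Θ : ℕ → ℕ → Ω → V d → ℝ) (α γ : ℝ) : Prop where
  Ystat : Stationary Y ℙ
  indep : ProbabilityTheory.Indep
      (⨆ v, MeasurableSpace.comap (Y v) inferInstance)
      ((⨆ v, MeasurableSpace.comap (Z v) inferInstance) ⊔
        (⨆ s, ⨆ v, MeasurableSpace.comap (Zt s v) inferInstance) ⊔
        (⨆ s, ⨆ m, MeasurableSpace.comap (fun ω => Θ s m ω) inferInstance)) ℙ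
  gamma_gt : α < γ
  moment : Integrable (fun ω => |Y 0 ω| ^ γ) ℙ

/-- Ergodicity of the field `Y`: the invariant σ-algebra is trivial under its law. -/
def ErgodicField [MeasurableSpace Ω] (Y : V d → Ω → ℝ) (ℙ : Measure Ω) : Prop :=
  ∀ A : Set (Path d), MeasurableSet[invariants d] A → law Y ℙ A = 0 ∨ law Y ℙ A = 1

/-- The quantity `η^{t,K,m}((y_v))` from Theorem 3.1. -/
noncomputable def etaTKM [MeasurableSpace Ω] (ℙ : Measure Ω) (Y : V d → Ω → ℝ)
    (Θ : ℕ → ℕ → Ω → V d → ℝ) (ord : TransOrder d) (α : ℝ) (s K m : ℕ) :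
    Path d → ℝ := fun y =>
  (MeasureTheory.condExp (invariants d) (law Y ℙ)
      (fun yy : Path d =>
        ∫ ω, max (pPow (trunc K (yy 0) * Θ s m ω 0) α -
          pPow (fMax (Am ord.prec m 0) fun v => trunc K (yy v) * Θ s m ω v) α) 0 ∂ℙ) y) /
    ∫ ω, pPow (Θ s m ω 0) α ∂ℙ




lemma potter_iter (G : ℝ → ℝ) (x₀ γ : ℝ) (hγ : 0 < γ)
    (h2 : ∀ x, x₀ ≤ x → (2:ℝ)^(-γ) * G x ≤ G (2*x)) :
    ∀ k : ℕ, ∀ z, x₀ ≤ z → 0 < z → G z ≤ ((2:ℝ)^γ)^k * G (2^k * z) := by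
  intro k
  induction k with
  | zero => intro z hz hz0; simp
  | succ k ih =>
    intro z hz hz0
    have h1 : (1:ℝ) ≤ 2^k := one_le_pow₀ (by norm_num)
    have hzk : x₀ ≤ 2^k * z := le_trans hz (le_mul_of_one_le_left hz0.le h1)
    have h2' := h2 _ hzk
    have hpos : (0:ℝ) < (2:ℝ)^γ := rpow_pos_of_pos (by norm_num) γ
    have : G (2^k * z) ≤ (2:ℝ)^γ * G (2*(2^k*z)) := by
      have := mul_le_mul_of_nonneg_left h2' hpos.le
      rwa [← mul_assoc, ← rpow_add (by norm_num : (0:ℝ) < 2), add_neg_cancel,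
        rpow_zero, one_mul] at this
    calc G z ≤ ((2:ℝ)^γ)^k * G (2^k * z) := ih z hz hz0
      _ ≤ ((2:ℝ)^γ)^k * ((2:ℝ)^γ * G (2*(2^k*z))) :=
          mul_le_mul_of_nonneg_left this (pow_nonneg hpos.le k)
      _ = ((2:ℝ)^γ)^(k+1) * G (2^(k+1) * z) := by ring_nf
  
lemma potter (G : ℝ → ℝ) (hGanti : Antitone G) (hG0 : ∀ x, 0 ≤ G x) (x₀ γ : ℝ)
    (hγ : 0 < γ) (hx₀ : 0 < x₀)
    (h2 : ∀ x, x₀ ≤ x → (2:ℝ)^(-γ) * G x ≤ G (2*x)) :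
    ∀ z x, x₀ ≤ z → z ≤ x → G z ≤ (2:ℝ)^γ * (x/z)^γ * G x := by
  intro z x hz hzx
  have hz0 : 0 < z := lt_of_lt_of_le hx₀ hz
  have hx0 : 0 < x := lt_of_lt_of_le hz0 hzx
  have hex : ∃ n : ℕ, x ≤ 2^n * z := by
    obtain ⟨n, hn⟩ := pow_unbounded_of_one_lt (x/z) (by norm_num : (1:ℝ) < 2)
    exact ⟨n, by rw [div_lt_iff₀ hz0] at hn; linarith⟩
  classical
  set k := Nat.find hex with hk
  have hkx : x ≤ 2^k * z := Nat.find_spec hex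
  have h2γpos : (0:ℝ) < (2:ℝ)^γ := rpow_pos_of_pos (by norm_num) γ
  have hxz1 : (1:ℝ) ≤ x/z := (one_le_div hz0).2 hzx
  have hpow : ((2:ℝ)^γ)^k ≤ (2:ℝ)^γ * (x/z)^γ := by
    rcases Nat.eq_zero_or_pos k with h0 | hkpos
    · rw [h0, pow_zero]
      have h1 : (1:ℝ) ≤ (2:ℝ)^γ := one_le_rpow (by norm_num) hγ.le
      have h2 : (1:ℝ) ≤ (x/z)^γ := one_le_rpow hxz1 hγ.le
      nlinarith
    · obtain ⟨j, hj⟩ := Nat.exists_eq_succ_of_ne_zero hkpos.ne'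
      rw [hj]
      have hmin : ¬ (x ≤ 2^j * z) := Nat.find_min hex (by omega)
      push_neg at hmin
      have h2k : ((2:ℝ)^(j+1)) ≤ 2*(x/z) := by
        rw [pow_succ]
        have : (2:ℝ)^j < x/z := by rw [lt_div_iff₀ hz0]; linarith
        linarith
      have hb : (0:ℝ) ≤ (2:ℝ)^(j+1) := by positivity
      have := rpow_le_rpow hb h2k hγ.le
      calc ((2:ℝ)^γ)^(j+1) = ((2:ℝ)^(j+1):ℝ)^γ := by
            rw [← rpow_natCast ((2:ℝ)^γ) (j+1), ← rpow_natCast (2:ℝ) (j+1),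
              ← rpow_mul (by norm_num : (0:ℝ) ≤ 2), ← rpow_mul (by norm_num : (0:ℝ) ≤ 2)]
            ring_nf
        _ ≤ (2*(x/z))^γ := this
        _ = (2:ℝ)^γ * (x/z)^γ := mul_rpow (by norm_num) (by positivity)
  calc G z ≤ ((2:ℝ)^γ)^k * G (2^k * z) := potter_iter G x₀ γ hγ h2 k z hz hz0
    _ ≤ ((2:ℝ)^γ)^k * G x := by
        have := hGanti hkx
        exact mul_le_mul_of_nonneg_left this (by positivity)
    _ ≤ (2:ℝ)^γ * (x/z)^γ * G x := mul_le_mul_of_nonneg_right hpow (hG0 x)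



lemma glow (G : ℝ → ℝ) (γ x₀ : ℝ) (hx₀ : 0 < x₀)
    (hPotter : ∀ z x, x₀ ≤ z → z ≤ x → G z ≤ (2:ℝ)^γ * (x/z)^γ * G x) :
    ∀ x, x₀ ≤ x → x₀^γ * G x₀ / (2:ℝ)^γ ≤ x^γ * G x := by
  intro x hx
  have h2γ : (0:ℝ) < (2:ℝ)^γ := rpow_pos_of_pos (by norm_num) γ
  have hx0 : (0:ℝ) < x := lt_of_lt_of_le hx₀ hx
  have h := hPotter x₀ x le_rfl hx
  rw [div_rpow hx0.le hx₀.le] at h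
  have hx₀γ : (0:ℝ) < x₀^γ := rpow_pos_of_pos hx₀ γ
  rw [div_le_iff₀ h2γ]
  calc x₀^γ * G x₀ ≤ x₀^γ * ((2:ℝ)^γ * (x^γ / x₀^γ) * G x) :=
        mul_le_mul_of_nonneg_left h hx₀γ.le
    _ = x^γ * G x * (2:ℝ)^γ := by field_simp

set_option maxHeartbeats 1000000 in
lemma tailBound (G : ℝ → ℝ) (hGanti : Antitone G) (hGpos : ∀ x, 0 < G x)
    (γ x₀ : ℝ) (hγ : 0 < γ) (hx₀ : 0 < x₀)
    (hPotter : ∀ z x, x₀ ≤ z → z ≤ x → G z ≤ (2:ℝ)^γ * (x/z)^γ * G x)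
    (F : ℝ → ℝ → ℝ) (hF0 : ∀ x y, 0 ≤ F x y) (hF1 : ∀ x y, F x y ≤ 1)
    (hFzero : ∀ x, x₀ ≤ x → F x 0 = 0)
    (T C₁ : ℝ) (hT : x₀ ≤ T) (hC₁ : 0 ≤ C₁)
    (hFb : ∀ x y, x₀ ≤ x → y ≠ 0 → T ≤ x/|y| → F x y ≤ C₁ * G (x/|y|)) :
    ∃ c : ℝ, 0 < c ∧ ∀ x y, x₀ ≤ x →
      F x y / G x ≤ c * (|y|^γ + if |y| ≤ 1 then 1 else 0) := by
  have h2γ : (0:ℝ) < (2:ℝ)^γ := rpow_pos_of_pos (by norm_num) γ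
  have hT0 : 0 < T := lt_of_lt_of_le hx₀ hT
  have hGT := hGpos T
  have hGTi : (0:ℝ) < (G T)⁻¹ := inv_pos.2 hGT
  have hx₀γ : (0:ℝ) < x₀^γ := rpow_pos_of_pos hx₀ γ
  have hGx₀ := hGpos x₀
  have hε₁pos : (0:ℝ) < x₀^γ * G x₀ / (2:ℝ)^γ := by positivity
  have hlow := glow G γ x₀ hx₀ hPotter
  have hTγ : (0:ℝ) < T^γ := rpow_pos_of_pos hT0 γ
  have hTε : (0:ℝ) < T^γ / (x₀^γ * G x₀ / (2:ℝ)^γ) := by positivity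
  refine ⟨C₁ * (2:ℝ)^γ + (G T)⁻¹ + T^γ / (x₀^γ * G x₀ / (2:ℝ)^γ) + C₁ + 1,
    by positivity, ?_⟩
  intro x y hx
  have hGx := hGpos x
  have hx0 : (0:ℝ) < x := lt_of_lt_of_le hx₀ hx
  rw [div_le_iff₀ hGx]
  rcases eq_or_ne y 0 with rfl | hy
  · rw [hFzero x hx]
    have h01 : |(0:ℝ)| ≤ 1 := by norm_num
    rw [if_pos h01, abs_zero, zero_rpow hγ.ne', zero_add, mul_one]
    positivity
  · have hay : 0 < |y| := abs_pos.2 hy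
    have hu0 : 0 < x / |y| := div_pos hx0 hay
    have hyγ : (0:ℝ) ≤ |y|^γ := rpow_nonneg (abs_nonneg y) γ
    by_cases hyl : |y| ≤ 1
    · rw [if_pos hyl]
      have hxu : x ≤ x / |y| := by
        rw [le_div_iff₀ hay]; nlinarith
      have key : F x y ≤ ((G T)⁻¹ + C₁) * G x := by
        by_cases hTu : T ≤ x / |y|
        · have h1 : F x y ≤ C₁ * G (x/|y|) := hFb x y hx hy hTu
          have h2 : G (x/|y|) ≤ G x := hGanti hxu
          nlinarith
        · push_neg at hTu
          have hxT : x ≤ T := le_trans hxu hTu.le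
          have h2 : G T ≤ G x := hGanti hxT
          have h4 : (1:ℝ) ≤ (G T)⁻¹ * G x := by
            rw [inv_mul_eq_div, le_div_iff₀ hGT, one_mul]; exact h2
          nlinarith [hF1 x y, hF0 x y, mul_nonneg hC₁ hGx.le]
      have h6 : (G T)⁻¹ + C₁ ≤ C₁ * (2:ℝ)^γ + (G T)⁻¹ + T^γ / (x₀^γ * G x₀ / (2:ℝ)^γ) + C₁ + 1 := by
        nlinarith [mul_nonneg hC₁ h2γ.le]
      have h7 := mul_le_mul_of_nonneg_right h6 hGx.le
      have h8 : (0:ℝ) ≤ (C₁ * (2:ℝ)^γ + (G T)⁻¹ + T^γ / (x₀^γ * G x₀ / (2:ℝ)^γ) + C₁ + 1) * |y|^γ * G x := by positivity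
      nlinarith
    · rw [if_neg hyl]; push_neg at hyl
      have hux : x / |y| ≤ x := by
        rw [div_le_iff₀ hay]; nlinarith
      have hyγ1 : (1:ℝ) ≤ |y|^γ := one_le_rpow hyl.le hγ.le
      by_cases hTu : T ≤ x / |y|
      · have hx₀u : x₀ ≤ x / |y| := le_trans hT hTu
        have h1 : F x y ≤ C₁ * G (x/|y|) := hFb x y hx hy hTu
        have h2 : G (x/|y|) ≤ (2:ℝ)^γ * (x/(x/|y|))^γ * G x := hPotter _ x hx₀u hux
        rw [div_div_cancel₀ hx0.ne'] at h2
        have h3 : F x y ≤ C₁ * ((2:ℝ)^γ * |y|^γ * G x) :=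
          le_trans h1 (mul_le_mul_of_nonneg_left h2 hC₁)
        rw [add_zero]
        have hcoef : C₁ * (2:ℝ)^γ ≤ C₁ * (2:ℝ)^γ + (G T)⁻¹ + T^γ / (x₀^γ * G x₀ / (2:ℝ)^γ) + C₁ + 1 := by
          linarith
        have h9 := mul_le_mul_of_nonneg_right hcoef (mul_nonneg hyγ hGx.le)
        linarith
      · push_neg at hTu
        have hxTy : x < T * |y| := by
          rw [div_lt_iff₀ hay] at hTu
          linarith
        have h2 : x₀^γ * G x₀ / (2:ℝ)^γ ≤ x^γ * G x := hlow x hx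
        have h3 : x^γ ≤ T^γ * |y|^γ := by
          rw [← mul_rpow hT0.le (abs_nonneg y)]
          exact rpow_le_rpow hx0.le hxTy.le hγ.le
        have h4 : x₀^γ * G x₀ / (2:ℝ)^γ ≤ T^γ * |y|^γ * G x :=
          le_trans h2 (mul_le_mul_of_nonneg_right h3 hGx.le)
        have h5 : (1:ℝ) ≤ (T^γ / (x₀^γ * G x₀ / (2:ℝ)^γ)) * (|y|^γ * G x) := by
          rw [div_mul_eq_mul_div, le_div_iff₀ hε₁pos, one_mul]
          calc x₀^γ * G x₀ / (2:ℝ)^γ ≤ T^γ * |y|^γ * G x := h4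
            _ = T^γ * (|y|^γ * G x) := by ring
        rw [add_zero]
        have hcoef : T^γ / (x₀^γ * G x₀ / (2:ℝ)^γ) ≤ C₁ * (2:ℝ)^γ + (G T)⁻¹ + T^γ / (x₀^γ * G x₀ / (2:ℝ)^γ) + C₁ + 1 := by
          nlinarith [mul_nonneg hC₁ h2γ.le]
        have h9 := mul_le_mul_of_nonneg_right hcoef (mul_nonneg hyγ hGx.le)
        linarith [hF1 x y, h5, mul_le_mul_of_nonneg_right hcoef (mul_nonneg hyγ hGx.le)]



lemma antitonize (K₀ : ℕ → ℝ) (h0 : ∀ s, 0 ≤ K₀ s) (hten : Tendsto K₀ atTop (nhds 0)) :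
    ∃ K : ℕ → ℝ, Antitone K ∧ Tendsto K atTop (nhds 0) ∧ ∀ s, K₀ s ≤ K s := by
  have hbdd : BddAbove (Set.range K₀) := hten.bddAbove_range
  obtain ⟨B, hB⟩ := hbdd
  refine ⟨fun s => ⨆ r : ℕ, K₀ (s + r), ?_, ?_, ?_⟩
  · intro s s' hss'
    refine ciSup_le fun r => ?_
    have h1 : s' + r = s + (s' - s + r) := by omega
    rw [h1]
    exact le_ciSup ⟨B, fun x hx => by
      obtain ⟨r', rfl⟩ := hx; exact hB ⟨s + r', rfl⟩⟩ (s' - s + r)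
  · rw [Metric.tendsto_atTop]
    intro ε hε
    obtain ⟨N, hN⟩ := (Metric.tendsto_atTop.1 hten) (ε/2) (by linarith)
    refine ⟨N, fun s hs => ?_⟩
    have h1 : (⨆ r : ℕ, K₀ (s + r)) ≤ ε/2 := by
      refine ciSup_le fun r => ?_
      have := hN (s + r) (by omega)
      rw [Real.dist_eq, sub_zero, abs_of_nonneg (h0 _)] at this
      linarith
    have h2 : 0 ≤ ⨆ r : ℕ, K₀ (s + r) := le_trans (h0 s) (by
      have : K₀ (s + 0) ≤ ⨆ r : ℕ, K₀ (s + r) := le_ciSup ⟨B, fun x hx => by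
        obtain ⟨r', rfl⟩ := hx; exact hB ⟨s + r', rfl⟩⟩ 0
      simpa using this)
    rw [Real.dist_eq, sub_zero, abs_of_nonneg h2]
    linarith
  · intro s
    have : K₀ (s + 0) ≤ ⨆ r : ℕ, K₀ (s + r) := le_ciSup ⟨B, fun x hx => by
      obtain ⟨r', rfl⟩ := hx; exact hB ⟨s + r', rfl⟩⟩ 0
    simpa using this


lemma aux_normRm_zero [MeasurableSpace Ω] (R : V d → Ω → ℝ) (ω : Ω) :
    normRm R 0 ω = |R 0 ω| := by
  have hBm : Bm d 0 = {(0 : V d)} := by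
    unfold Bm
    have h1 : (fun _ : Fin d => -((0:ℕ) : ℤ)) = (0 : V d) := by funext; simp
    rw [h1]
    have h2 : (fun _ : Fin d => ((0:ℕ) : ℤ)) = (0 : V d) := by funext; simp
    rw [h2, Finset.Icc_self]
  unfold normRm fMax
  rw [hBm]
  simp

set_option maxHeartbeats 4000000 in
/-- **Lemma 5.1** (tail ratio bounds for the stochastic volatility factors). -/
theorem statement_7 [MeasurableSpace Ω] (ℙ : Measure Ω) [IsProbabilityMeasure ℙ]
    (D : ℕ → Finset (V d)) (t : ℕ → Fin d → ℕ) (xs : ℕ → Fin d → ℝ) (ord : TransOrder d)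
    (Z : V d → Ω → ℝ) (Zt : ℕ → V d → Ω → ℝ) (Θ : ℕ → ℕ → Ω → V d → ℝ) (α p γ : ℝ)
    (hIdx : IndexAssumption D t xs)
    (hZ : ZAssumption ℙ (fun n => ((D n).card : ℝ)) t ord Z Zt Θ α p)
    (hγ : α < γ) :
    ∃ c x₀ : ℝ, 0 < c ∧ 0 < x₀ ∧
      (∀ x y : ℝ, x₀ ≤ x →
        (ℙ {ω | x < y * Z 0 ω}).toReal / (ℙ {ω | x < Z 0 ω}).toReal ≤
          c * (|y| ^ γ + if |y| ≤ 1 then 1 else 0)) ∧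
      (∀ s : ℕ, ∃ cs : ℝ, 0 < cs ∧ ∀ x y : ℝ, x₀ ≤ x →
        (ℙ {ω | x < y * Zt s 0 ω}).toReal / (ℙ {ω | x < Z 0 ω}).toReal ≤
          cs * (|y| ^ γ + if |y| ≤ 1 then 1 else 0)) ∧
      (∃ K xt : ℕ → ℝ, Antitone K ∧ Tendsto K atTop (nhds 0) ∧ (∀ s, 0 < xt s) ∧
        ∀ s : ℕ, ∀ x y : ℝ, xt s ≤ x → |y| ≤ x / xt s →
          max (ℙ {ω | x < y * Zt s 0 ω ∧ y * Z 0 ω ≤ x}).toReal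
              (ℙ {ω | x < y * Z 0 ω ∧ y * Zt s 0 ω ≤ x}).toReal /
            (ℙ {ω | x < Z 0 ω}).toReal ≤
            K s * (|y| ^ γ + if |y| ≤ 1 then 1 else 0)) := by
  classical
  obtain ⟨Cp, Cm, hsCpCm, hCp1, hCm1⟩ := hZ.tails
  have hα := hZ.alpha_pos
  have hγ0 : 0 < γ := hα.trans hγ
  have hZmeas : Measurable (Z 0) := hZ.Zstat.1 0
  have hZtmeas : ∀ s : ℕ, Measurable (Zt s 0) := fun s => (hZ.Ztstat s).1 0
  have hp0 : 0 < p := hZ.p_mem.1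
  have hp1 : p ≤ 1 := hZ.p_mem.2
  set q : ℝ := (1 - p) / p with hqdef
  have hq0 : 0 ≤ q := div_nonneg (by linarith) hp0.le
  set G : ℝ → ℝ := fun x => (ℙ {ω | x < Z 0 ω}).toReal with hGdef
  set Gm : ℝ → ℝ := fun x => (ℙ {ω | Z 0 ω < -x}).toReal with hGmdef
  set H : ℕ → ℝ → ℝ := fun s u => (ℙ {ω | u < Zt s 0 ω}).toReal with hHdef
  set Mm : ℕ → ℝ → ℝ := fun s u => (ℙ {ω | Zt s 0 ω < -u}).toReal with hMdef
  -- basic probability facts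
  have hprob : ∀ S : Set Ω, (ℙ S).toReal ≤ 1 := fun S => by
    have h := ENNReal.toReal_mono (measure_ne_top ℙ Set.univ)
      (measure_mono (Set.subset_univ S))
    simpa using h
  have hmono : ∀ S T : Set Ω, S ⊆ T → (ℙ S).toReal ≤ (ℙ T).toReal := fun S T h =>
    ENNReal.toReal_mono (measure_ne_top ℙ T) (measure_mono h)
  have hzero : ∀ S : Set Ω, (ℙ S).toReal = 0 → ℙ S = 0 := fun S h =>
    ((ENNReal.toReal_eq_zero_iff _).1 h).resolve_right (measure_ne_top ℙ S)
  have hGanti : Antitone G := fun a b hab => hmono _ _ (fun ω h => lt_of_le_of_lt hab h)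
  have hGpos : ∀ x, 0 < G x := by
    intro x
    by_contra hcon
    push_neg at hcon
    have hx0 : G x = 0 := le_antisymm hcon ENNReal.toReal_nonneg
    have hev : (fun u : ℝ => (ℙ {ω | u < Zt 0 0 ω}).toReal /
        (ℙ {ω | u < Z 0 ω}).toReal) =ᶠ[atTop] (fun _ => (0:ℝ)) := by
      filter_upwards [eventually_ge_atTop x] with u hu
      have hGu : G u = 0 := le_antisymm (hx0 ▸ hGanti hu) ENNReal.toReal_nonneg
      show (ℙ {ω | u < Zt 0 0 ω}).toReal / G u = 0
      rw [hGu, div_zero]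
    have hlimH := (hsCpCm 0).2.2.1
    have h0 := tendsto_nhds_unique (hlimH.congr' hev) tendsto_const_nhds
    linarith [(hsCpCm 0).1]
  have hGmpos : ∀ x, 0 < Gm x := by
    intro x
    by_contra hcon
    push_neg at hcon
    have hx0 : Gm x = 0 := le_antisymm hcon ENNReal.toReal_nonneg
    have hm0 : ℙ {ω | Z 0 ω < -x} = 0 := hzero _ hx0
    have hkey : ∀ s : ℕ, Filter.liminf (fun x' : ℝ =>
        (ℙ {ω | Zt s 0 ω < -x' ∧ Z 0 ω < -x'}).toReal /
        (ℙ {ω | Z 0 ω < -x'}).toReal) atTop = 0 := by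
      intro s
      have hev : (fun x' : ℝ => (ℙ {ω | Zt s 0 ω < -x' ∧ Z 0 ω < -x'}).toReal /
          (ℙ {ω | Z 0 ω < -x'}).toReal) =ᶠ[atTop] (fun _ => (0:ℝ)) := by
        filter_upwards [eventually_ge_atTop x] with u hu
        have hsub : {ω | Z 0 ω < -u} ⊆ {ω | Z 0 ω < -x} := fun ω hω => by
          simp only [Set.mem_setOf_eq] at *; linarith
        have h1 : ℙ {ω | Z 0 ω < -u} = 0 :=
          le_antisymm (le_trans (measure_mono hsub) hm0.le) (zero_le)
        simp [h1]
      rw [liminf_congr hev, liminf_const]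
    have hjn := hZ.joint_neg
    rw [show (fun s : ℕ => Filter.liminf (fun x' : ℝ =>
        (ℙ {ω | Zt s 0 ω < -x' ∧ Z 0 ω < -x'}).toReal /
        (ℙ {ω | Z 0 ω < -x'}).toReal) atTop) = fun _ => (0:ℝ) from funext hkey,
      liminf_const] at hjn
    norm_num at hjn
  -- regular variation of |Zt 0 0|
  obtain ⟨hΘmeas, hΘnorm, hlim⟩ := hZ.regvar 0 0
  have hnr : ∀ ω, normRm (Zt 0) 0 ω = |Zt 0 0 ω| := fun ω => aux_normRm_zero (Zt 0) ω
  have hsetEq : ∀ c : ℝ, {ω | c < normRm (Zt 0) 0 ω} = {ω | c < |Zt 0 0 ω|} := by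
    intro c; ext ω; simp only [Set.mem_setOf_eq, hnr]
  have habsmeas : ∀ (c : ℝ), MeasurableSet {ω | c < |Zt 0 0 ω|} :=
    fun c => measurableSet_lt measurable_const (hZtmeas 0).abs
  have hlim2 := hlim 2 (by norm_num) (fun _ => (1:ℝ)) continuous_const
    ⟨1, fun y => by norm_num⟩ (fun _ _ _ => rfl)
  have hNrv : Tendsto (fun u : ℝ => (ℙ {ω | 2*u < |Zt 0 0 ω|}).toReal /
      (ℙ {ω | u < |Zt 0 0 ω|}).toReal) atTop (nhds ((2:ℝ) ^ (-α))) := by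
    have hval : (2:ℝ) ^ (-α) * ∫ ω, (fun _ : Path d => (1:ℝ)) (Θ 0 0 ω) ∂ℙ
        = (2:ℝ) ^ (-α) := by simp
    rw [hval] at hlim2
    refine hlim2.congr (fun u => ?_)
    have hkey : (∫ ω, Set.indicator {ω' : Ω | 2 * u < normRm (Zt 0) 0 ω'}
        (fun ω' => (fun _ : Path d => (1:ℝ))
          (fun v => Zt 0 v ω' / normRm (Zt 0) 0 ω')) ω ∂ℙ)
        = (ℙ {ω | 2*u < |Zt 0 0 ω|}).toReal := by
      rw [show {ω : Ω | 2*u < normRm (Zt 0) 0 ω} = {ω | 2*u < |Zt 0 0 ω|} from hsetEq _]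
      have := integral_indicator_const (μ := ℙ) (1:ℝ) (habsmeas (2*u))
      simpa [measureReal_def] using this
    rw [hkey, hsetEq u]
  -- split N = H 0 + Mm 0
  have hsplit : ∀ u : ℝ, 0 ≤ u → (ℙ {ω | u < |Zt 0 0 ω|}).toReal = H 0 u + Mm 0 u := by
    intro u hu
    have hun : {ω | u < |Zt 0 0 ω|} = {ω | u < Zt 0 0 ω} ∪ {ω | Zt 0 0 ω < -u} := by
      ext ω; simp only [Set.mem_setOf_eq, Set.mem_union, lt_abs, lt_neg]
    have hdis : Disjoint {ω | u < Zt 0 0 ω} {ω | Zt 0 0 ω < -u} := by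
      rw [Set.disjoint_left]
      intro ω h1 h2
      simp only [Set.mem_setOf_eq] at h1 h2
      linarith
    rw [hun, measure_union hdis (measurableSet_lt (hZtmeas 0) measurable_const),
      ENNReal.toReal_add (measure_ne_top _ _) (measure_ne_top _ _)]
  -- chain of tendstos
  have hq_tb : Tendsto (fun x => Gm x / G x) atTop (nhds q) := hZ.tail_balance
  have hH0 : Tendsto (fun u => H 0 u / G u) atTop (nhds (Cp 0)) := (hsCpCm 0).2.2.1
  have hM0 : Tendsto (fun u => Mm 0 u / Gm u) atTop (nhds (Cm 0)) := (hsCpCm 0).2.2.2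
  set L : ℝ := Cp 0 + Cm 0 * q with hLdef
  have hLpos : 0 < L := by
    have h1 := (hsCpCm 0).1
    have h2 := (hsCpCm 0).2.1
    nlinarith
  have hNG : Tendsto (fun u : ℝ => (ℙ {ω | u < |Zt 0 0 ω|}).toReal / G u) atTop (nhds L) := by
    have hsum := hH0.add (hM0.mul hq_tb)
    refine hsum.congr' ?_
    filter_upwards [eventually_ge_atTop (0:ℝ)] with u hu
    rw [hsplit u hu]
    have h1 : Gm u ≠ 0 := (hGmpos u).ne'
    field_simp
  have ht2 : Tendsto (fun u : ℝ => 2 * u) atTop atTop :=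
    Tendsto.const_mul_atTop (by norm_num) tendsto_id
  have hNG2 : Tendsto (fun u : ℝ => (ℙ {ω | 2*u < |Zt 0 0 ω|}).toReal / G (2*u))
      atTop (nhds L) := hNG.comp ht2
  have hNposev : ∀ᶠ u : ℝ in atTop, 0 < (ℙ {ω | u < |Zt 0 0 ω|}).toReal := by
    filter_upwards [hNG.eventually (eventually_gt_nhds (by linarith : L/2 < L))] with u hu
    by_contra hcon
    push_neg at hcon
    have : (ℙ {ω | u < |Zt 0 0 ω|}).toReal = 0 := le_antisymm hcon ENNReal.toReal_nonneg
    rw [this, zero_div] at hu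
    linarith
  have hN2posev : ∀ᶠ u : ℝ in atTop, 0 < (ℙ {ω | 2*u < |Zt 0 0 ω|}).toReal :=
    ht2.eventually hNposev
  have hRV : Tendsto (fun x => G (2*x) / G x) atTop (nhds ((2:ℝ) ^ (-α))) := by
    have hdiv := hNrv.mul (hNG.div hNG2 hLpos.ne')
    rw [div_self hLpos.ne', mul_one] at hdiv
    refine hdiv.congr' ?_
    filter_upwards [hNposev, hN2posev] with u h1 h2
    have hg1 : G u ≠ 0 := (hGpos u).ne'
    have hg2 : G (2*u) ≠ 0 := (hGpos (2*u)).ne'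
    rw [Pi.div_apply]
    field_simp
  -- threshold x₀
  have hαγ : (2:ℝ) ^ (-γ) < (2:ℝ) ^ (-α) :=
    (Real.rpow_lt_rpow_left_iff (by norm_num)).2 (by linarith)
  have h2ev : ∀ᶠ x : ℝ in atTop, (2:ℝ) ^ (-γ) * G x ≤ G (2*x) := by
    filter_upwards [hRV.eventually (eventually_gt_nhds hαγ)] with x hx
    rw [lt_div_iff₀ (hGpos x)] at hx
    linarith
  have hqev : ∀ᶠ u : ℝ in atTop, Gm u ≤ (q+1) * G u := by
    filter_upwards [hq_tb.eventually (eventually_lt_nhds (lt_add_one q))] with u hu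
    rw [div_lt_iff₀ (hGpos u)] at hu
    linarith
  obtain ⟨x₁, hx₁⟩ := eventually_atTop.1 (h2ev.and hqev)
  set x₀ : ℝ := max x₁ 1 with hx₀def
  have hx₀pos : 0 < x₀ := lt_of_lt_of_le one_pos (le_max_right _ _)
  have hPotter : ∀ z x : ℝ, x₀ ≤ z → z ≤ x → G z ≤ (2:ℝ)^γ * (x/z)^γ * G x :=
    potter G hGanti (fun x => (hGpos x).le) x₀ γ hγ0 hx₀pos
      (fun x hx => (hx₁ x (le_trans (le_max_left _ _) hx)).1)
  have hqx : ∀ u : ℝ, x₀ ≤ u → Gm u ≤ (q+1) * G u :=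
    fun u hu => (hx₁ u (le_trans (le_max_left _ _) hu)).2
  -- Part 1
  have hbound1 : ∀ x y : ℝ, x₀ ≤ x → y ≠ 0 → x₀ ≤ x / |y| →
      (ℙ {ω | x < y * Z 0 ω}).toReal ≤ (q + 1) * G (x / |y|) := by
    intro x y hx hy hT
    rcases hy.lt_or_gt with hneg | hpos
    · have habs : |y| = -y := abs_of_neg hneg
      have hset : {ω | x < y * Z 0 ω} = {ω | Z 0 ω < -(x / |y|)} := by
        ext ω
        simp only [Set.mem_setOf_eq]
        rw [habs, div_neg, neg_neg, lt_div_iff_of_neg hneg, mul_comm]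
      rw [hset]
      exact hqx _ hT
    · have habs : |y| = y := abs_of_pos hpos
      have hset : {ω | x < y * Z 0 ω} = {ω | x / |y| < Z 0 ω} := by
        ext ω
        simp only [Set.mem_setOf_eq]
        rw [habs, div_lt_iff₀ hpos, mul_comm]
      rw [hset]
      nlinarith [hGpos (x/|y|), hmono {ω | x / |y| < Z 0 ω} {ω | x / |y| < Z 0 ω} (le_refl _)]
  have hzeroF : ∀ W : Ω → ℝ, ∀ x : ℝ, x₀ ≤ x → (ℙ {ω | x < (0:ℝ) * W ω}).toReal = 0 := by
    intro W x hx
    have hset : {ω | x < (0:ℝ) * W ω} = (∅ : Set Ω) := by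
      ext ω
      simp only [Set.mem_setOf_eq, Set.mem_empty_iff_false, iff_false, not_lt, zero_mul]
      linarith
    rw [hset]
    simp
  obtain ⟨c, hcpos, hc⟩ := tailBound G hGanti hGpos γ x₀ hγ0 hx₀pos hPotter
    (fun x y => (ℙ {ω | x < y * Z 0 ω}).toReal) (fun x y => ENNReal.toReal_nonneg)
    (fun x y => hprob _) (fun x hx => hzeroF _ x hx)
    x₀ (q+1) le_rfl (by linarith) hbound1
  refine ⟨c, x₀, hcpos, hx₀pos, fun x y hx => hc x y hx, ?_, ?_⟩
  · -- Part 2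
    intro s
    obtain ⟨hCps, hCms, hHs, hMs⟩ := hsCpCm s
    have hHsev : ∀ᶠ u : ℝ in atTop, H s u ≤ (Cp s + 1) * G u := by
      filter_upwards [hHs.eventually (eventually_lt_nhds (lt_add_one (Cp s)))] with u hu
      rw [div_lt_iff₀ (hGpos u)] at hu
      linarith
    have hMsev : ∀ᶠ u : ℝ in atTop, Mm s u ≤ (Cm s + 1) * Gm u := by
      filter_upwards [hMs.eventually (eventually_lt_nhds (lt_add_one (Cm s)))] with u hu
      rw [div_lt_iff₀ (hGmpos u)] at hu
      linarith
    obtain ⟨T₁, hT₁⟩ := eventually_atTop.1 (hHsev.and hMsev)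
    have hTx₀ : x₀ ≤ max T₁ x₀ := le_max_right _ _
    have hC₁nn : 0 ≤ (Cp s + 1) + (Cm s + 1) * (q + 1) := by nlinarith
    have hbound2 : ∀ x y : ℝ, x₀ ≤ x → y ≠ 0 → max T₁ x₀ ≤ x / |y| →
        (ℙ {ω | x < y * Zt s 0 ω}).toReal ≤
          ((Cp s + 1) + (Cm s + 1) * (q + 1)) * G (x / |y|) := by
      intro x y hx hy hT'
      have hu₁ : T₁ ≤ x / |y| := le_trans (le_max_left _ _) hT'
      have hu₀ : x₀ ≤ x / |y| := le_trans hTx₀ hT'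
      obtain ⟨hH', hM'⟩ := hT₁ _ hu₁
      have hGm' := hqx _ hu₀
      have hGu := hGpos (x/|y|)
      have hGmu := hGmpos (x/|y|)
      rcases hy.lt_or_gt with hneg | hpos
      · have habs : |y| = -y := abs_of_neg hneg
        have hset : {ω | x < y * Zt s 0 ω} = {ω | Zt s 0 ω < -(x / |y|)} := by
          ext ω
          simp only [Set.mem_setOf_eq]
          rw [habs, div_neg, neg_neg, lt_div_iff_of_neg hneg, mul_comm]
        rw [hset]
        show Mm s (x/|y|) ≤ _
        have h1 : (Cm s + 1) * Gm (x/|y|) ≤ (Cm s + 1) * ((q+1) * G (x/|y|)) :=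
          mul_le_mul_of_nonneg_left hGm' (by linarith)
        have h2 : 0 ≤ (Cp s + 1) * G (x/|y|) := mul_nonneg (by linarith) hGu.le
        nlinarith
      · have habs : |y| = y := abs_of_pos hpos
        have hset : {ω | x < y * Zt s 0 ω} = {ω | x / |y| < Zt s 0 ω} := by
          ext ω
          simp only [Set.mem_setOf_eq]
          rw [habs, div_lt_iff₀ hpos, mul_comm]
        rw [hset]
        show H s (x/|y|) ≤ _
        have h2 : 0 ≤ (Cm s + 1) * ((q+1) * G (x/|y|)) :=
          mul_nonneg (by linarith) (mul_nonneg (by linarith) hGu.le)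
        nlinarith
    obtain ⟨cs, hcspos, hcs⟩ := tailBound G hGanti hGpos γ x₀ hγ0 hx₀pos hPotter
      (fun x y => (ℙ {ω | x < y * Zt s 0 ω}).toReal) (fun x y => ENNReal.toReal_nonneg)
      (fun x y => hprob _) (fun x hx => hzeroF _ x hx)
      (max T₁ x₀) ((Cp s + 1) + (Cm s + 1) * (q + 1)) hTx₀ hC₁nn hbound2
    exact ⟨cs, hcspos, fun x y hx => hcs x y hx⟩
  · -- Part 3
    have hdiff : ∀ S T : Set Ω, MeasurableSet T →
        (ℙ (S \ T)).toReal = (ℙ S).toReal - (ℙ (S ∩ T)).toReal := by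
      intro S T hT
      have h := measure_diff_add_inter (μ := ℙ) S hT
      have h2 : (ℙ (S \ T)).toReal + (ℙ (S ∩ T)).toReal = (ℙ S).toReal := by
        rw [← ENNReal.toReal_add (measure_ne_top _ _) (measure_ne_top _ _), h]
      linarith
    set ε : ℕ → ℝ := fun s => 1 / ((s:ℝ) + 1) with hεdef
    have hεpos : ∀ s, 0 < ε s := fun s => by positivity
    have hεten : Tendsto ε atTop (nhds 0) := tendsto_one_div_add_atTop_nhds_zero_nat
    set Lp : ℕ → ℝ := fun s => Filter.liminf (fun x : ℝ =>
      (ℙ {ω | x < Zt s 0 ω ∧ x < Z 0 ω}).toReal /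
      (ℙ {ω | x < Z 0 ω}).toReal) atTop with hLpdef
    set Lm : ℕ → ℝ := fun s => Filter.liminf (fun x : ℝ =>
      (ℙ {ω | Zt s 0 ω < -x ∧ Z 0 ω < -x}).toReal /
      (ℙ {ω | Z 0 ω < -x}).toReal) atTop with hLmdef
    have hrp_nonneg : ∀ s : ℕ, ∀ x : ℝ, 0 ≤ (ℙ {ω | x < Zt s 0 ω ∧ x < Z 0 ω}).toReal /
        (ℙ {ω | x < Z 0 ω}).toReal :=
      fun s x => div_nonneg ENNReal.toReal_nonneg ENNReal.toReal_nonneg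
    have hrm_nonneg : ∀ s : ℕ, ∀ x : ℝ, 0 ≤ (ℙ {ω | Zt s 0 ω < -x ∧ Z 0 ω < -x}).toReal /
        (ℙ {ω | Z 0 ω < -x}).toReal :=
      fun s x => div_nonneg ENNReal.toReal_nonneg ENNReal.toReal_nonneg
    have hrp_ge : ∀ s : ℕ, IsBoundedUnder (· ≥ ·) (atTop : Filter ℝ) (fun x : ℝ =>
        (ℙ {ω | x < Zt s 0 ω ∧ x < Z 0 ω}).toReal / (ℙ {ω | x < Z 0 ω}).toReal) :=
      fun s => isBoundedUnder_of ⟨0, hrp_nonneg s⟩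
    have hrm_ge : ∀ s : ℕ, IsBoundedUnder (· ≥ ·) (atTop : Filter ℝ) (fun x : ℝ =>
        (ℙ {ω | Zt s 0 ω < -x ∧ Z 0 ω < -x}).toReal / (ℙ {ω | Z 0 ω < -x}).toReal) :=
      fun s => isBoundedUnder_of ⟨0, hrm_nonneg s⟩
    have hrp_le1 : ∀ s : ℕ, ∀ x : ℝ, (ℙ {ω | x < Zt s 0 ω ∧ x < Z 0 ω}).toReal /
        (ℙ {ω | x < Z 0 ω}).toReal ≤ 1 := by
      intro s x
      rw [div_le_one (hGpos x)]
      exact hmono _ _ (fun ω h => h.2)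
    have hrm_le1 : ∀ s : ℕ, ∀ x : ℝ, (ℙ {ω | Zt s 0 ω < -x ∧ Z 0 ω < -x}).toReal /
        (ℙ {ω | Z 0 ω < -x}).toReal ≤ 1 := by
      intro s x
      rw [div_le_one (hGmpos x)]
      exact hmono _ _ (fun ω h => h.2)
    have hLple1 : ∀ s, Lp s ≤ 1 := fun s =>
      liminf_le_of_frequently_le ((Eventually.of_forall (hrp_le1 s)).frequently)
        (hrp_ge s)
    have hLmle1 : ∀ s, Lm s ≤ 1 := fun s =>
      liminf_le_of_frequently_le ((Eventually.of_forall (hrm_le1 s)).frequently)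
        (hrm_ge s)
    have hLpge0 : ∀ s, 0 ≤ Lp s := fun s =>
      le_liminf_of_le ((isBoundedUnder_of ⟨1, hrp_le1 s⟩).isCoboundedUnder_ge)
        (Eventually.of_forall (hrp_nonneg s))
    have hLmge0 : ∀ s, 0 ≤ Lm s := fun s =>
      le_liminf_of_le ((isBoundedUnder_of ⟨1, hrm_le1 s⟩).isCoboundedUnder_ge)
        (Eventually.of_forall (hrm_nonneg s))
    have hLpleCp : ∀ s, Lp s ≤ Cp s := by
      intro s
      have hHs := (hsCpCm s).2.2.1
      have h1 : Lp s ≤ Filter.liminf (fun u : ℝ => (ℙ {ω | u < Zt s 0 ω}).toReal /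
          (ℙ {ω | u < Z 0 ω}).toReal) atTop := by
        refine liminf_le_liminf (Eventually.of_forall fun u => ?_) (hrp_ge s)
          ((hHs.isBoundedUnder_le).isCoboundedUnder_ge)
        have hss : (ℙ {ω | u < Zt s 0 ω ∧ u < Z 0 ω}).toReal ≤
            (ℙ {ω | u < Zt s 0 ω}).toReal := hmono _ _ (fun ω h => h.1)
        gcongr
      rwa [hHs.liminf_eq] at h1
    have hLmleCm : ∀ s, Lm s ≤ Cm s := by
      intro s
      have hMs := (hsCpCm s).2.2.2
      have h1 : Lm s ≤ Filter.liminf (fun u : ℝ => (ℙ {ω | Zt s 0 ω < -u}).toReal /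
          (ℙ {ω | Z 0 ω < -u}).toReal) atTop := by
        refine liminf_le_liminf (Eventually.of_forall fun u => ?_) (hrm_ge s)
          ((hMs.isBoundedUnder_le).isCoboundedUnder_ge)
        have hss : (ℙ {ω | Zt s 0 ω < -u ∧ Z 0 ω < -u}).toReal ≤
            (ℙ {ω | Zt s 0 ω < -u}).toReal := hmono _ _ (fun ω h => h.1)
        gcongr
      rwa [hMs.liminf_eq] at h1
    have hjp : Filter.liminf Lp atTop = 1 := hZ.joint_pos
    have hjm : Filter.liminf Lm atTop = 1 := hZ.joint_neg
    have hLpten : Tendsto Lp atTop (nhds 1) := by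
      refine tendsto_of_le_liminf_of_limsup_le (ge_of_eq hjp) ?_
        (isBoundedUnder_of ⟨1, hLple1⟩) (isBoundedUnder_of ⟨0, hLpge0⟩)
      calc Filter.limsup Lp atTop ≤ Filter.limsup (fun _ : ℕ => (1:ℝ)) atTop :=
            limsup_le_limsup (Eventually.of_forall hLple1)
              ((isBoundedUnder_of ⟨0, hLpge0⟩).isCoboundedUnder_le)
              (isBoundedUnder_of ⟨1, fun _ => le_rfl⟩)
        _ = 1 := limsup_const 1
    have hLmten : Tendsto Lm atTop (nhds 1) := by
      refine tendsto_of_le_liminf_of_limsup_le (ge_of_eq hjm) ?_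
        (isBoundedUnder_of ⟨1, hLmle1⟩) (isBoundedUnder_of ⟨0, hLmge0⟩)
      calc Filter.limsup Lm atTop ≤ Filter.limsup (fun _ : ℕ => (1:ℝ)) atTop :=
            limsup_le_limsup (Eventually.of_forall hLmle1)
              ((isBoundedUnder_of ⟨0, hLmge0⟩).isCoboundedUnder_le)
              (isBoundedUnder_of ⟨1, fun _ => le_rfl⟩)
        _ = 1 := limsup_const 1
    -- the vanishing constants
    have h2γ1 : (1:ℝ) ≤ (2:ℝ)^γ := one_le_rpow (by norm_num) hγ0.le
    have h2γpos : (0:ℝ) < (2:ℝ)^γ := lt_of_lt_of_le one_pos h2γ1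
    set K₀ : ℕ → ℝ := fun s => (2:ℝ)^γ * ((q+1) * ((Cp s - Lp s) + (1 - Lp s) +
      (Cm s - Lm s) + (1 - Lm s) + 2 * ε s)) with hK₀def
    have hK₀nn : ∀ s, 0 ≤ K₀ s := by
      intro s
      have h1 := hLpleCp s; have h2 := hLple1 s; have h3 := hLmleCm s
      have h4 := hLmle1 s; have h5 := (hεpos s).le
      have hsum : 0 ≤ (Cp s - Lp s) + (1 - Lp s) + (Cm s - Lm s) + (1 - Lm s) + 2 * ε s := by
        linarith
      have := mul_nonneg (by linarith : (0:ℝ) ≤ q + 1) hsum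
      exact mul_nonneg h2γpos.le this
    have hK₀ten : Tendsto K₀ atTop (nhds 0) := by
      have hone : Tendsto (fun _ : ℕ => (1:ℝ)) atTop (nhds 1) := tendsto_const_nhds
      have hsum := ((((hCp1.sub hLpten).add (hone.sub hLpten)).add
          (hCm1.sub hLmten)).add (hone.sub hLmten)).add (hεten.const_mul (2:ℝ))
      have h2 := (hsum.const_mul (q+1)).const_mul ((2:ℝ)^γ)
      have h3 : (2:ℝ)^γ * ((q+1) * ((1 - 1) + ((1:ℝ) - 1) + ((1:ℝ) - 1) + ((1:ℝ) - 1)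
          + 2 * 0)) = 0 := by ring
      rw [h3] at h2
      exact h2
    obtain ⟨K, hKanti, hKten, hKge⟩ := antitonize K₀ hK₀nn hK₀ten
    -- thresholds
    have hthr : ∀ s : ℕ, ∃ T : ℝ, x₀ ≤ T ∧ ∀ u : ℝ, T ≤ u →
        (ℙ {ω | u < Zt s 0 ω}).toReal ≤ (Cp s + ε s) * (ℙ {ω | u < Z 0 ω}).toReal ∧
        (ℙ {ω | Zt s 0 ω < -u}).toReal ≤ (Cm s + ε s) * (ℙ {ω | Z 0 ω < -u}).toReal ∧
        (Lp s - ε s) * (ℙ {ω | u < Z 0 ω}).toReal ≤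
          (ℙ {ω | u < Zt s 0 ω ∧ u < Z 0 ω}).toReal ∧
        (Lm s - ε s) * (ℙ {ω | Z 0 ω < -u}).toReal ≤
          (ℙ {ω | Zt s 0 ω < -u ∧ Z 0 ω < -u}).toReal ∧
        (ℙ {ω | Z 0 ω < -u}).toReal ≤ (q+1) * (ℙ {ω | u < Z 0 ω}).toReal := by
      intro s
      obtain ⟨hCps, hCms, hHs, hMs⟩ := hsCpCm s
      have e1 : ∀ᶠ u : ℝ in atTop, (ℙ {ω | u < Zt s 0 ω}).toReal ≤
          (Cp s + ε s) * (ℙ {ω | u < Z 0 ω}).toReal := by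
        filter_upwards [hHs.eventually (eventually_lt_nhds
          (by linarith [hεpos s] : Cp s < Cp s + ε s))] with u hu
        rw [div_lt_iff₀ (hGpos u)] at hu
        exact hu.le
      have e2 : ∀ᶠ u : ℝ in atTop, (ℙ {ω | Zt s 0 ω < -u}).toReal ≤
          (Cm s + ε s) * (ℙ {ω | Z 0 ω < -u}).toReal := by
        filter_upwards [hMs.eventually (eventually_lt_nhds
          (by linarith [hεpos s] : Cm s < Cm s + ε s))] with u hu
        rw [div_lt_iff₀ (hGmpos u)] at hu
        exact hu.le
      have e3 : ∀ᶠ u : ℝ in atTop, (Lp s - ε s) * (ℙ {ω | u < Z 0 ω}).toReal ≤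
          (ℙ {ω | u < Zt s 0 ω ∧ u < Z 0 ω}).toReal := by
        have hlt : Lp s - ε s < Lp s := by linarith [hεpos s]
        filter_upwards [eventually_lt_of_lt_liminf hlt (hrp_ge s)] with u hu
        rw [lt_div_iff₀ (hGpos u)] at hu
        exact hu.le
      have e4 : ∀ᶠ u : ℝ in atTop, (Lm s - ε s) * (ℙ {ω | Z 0 ω < -u}).toReal ≤
          (ℙ {ω | Zt s 0 ω < -u ∧ Z 0 ω < -u}).toReal := by
        have hlt : Lm s - ε s < Lm s := by linarith [hεpos s]
        filter_upwards [eventually_lt_of_lt_liminf hlt (hrm_ge s)] with u hu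
        rw [lt_div_iff₀ (hGmpos u)] at hu
        exact hu.le
      have e5 : ∀ᶠ u : ℝ in atTop, (ℙ {ω | Z 0 ω < -u}).toReal ≤
          (q+1) * (ℙ {ω | u < Z 0 ω}).toReal := hqev
      obtain ⟨T', hT'⟩ := eventually_atTop.1 (e1.and (e2.and (e3.and (e4.and e5))))
      exact ⟨max T' x₀, le_max_right _ _,
        fun u hu => hT' u (le_trans (le_max_left _ _) hu)⟩
    choose xt hxt using hthr
    refine ⟨K, xt, hKanti, hKten,
      fun s => lt_of_lt_of_le hx₀pos (hxt s).1, ?_⟩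
    intro s x y hxts hyb
    have hxtpos : 0 < xt s := lt_of_lt_of_le hx₀pos (hxt s).1
    have hx₀x : x₀ ≤ x := le_trans (hxt s).1 hxts
    have hx0 : 0 < x := lt_of_lt_of_le hx₀pos hx₀x
    have hGx : (0:ℝ) < (ℙ {ω | x < Z 0 ω}).toReal := hGpos x
    have hKnn : 0 ≤ K s := le_trans (hK₀nn s) (hKge s)
    rcases eq_or_ne y 0 with rfl | hy
    · have hs1 : {ω | x < (0:ℝ) * Zt s 0 ω ∧ (0:ℝ) * Z 0 ω ≤ x} = (∅ : Set Ω) := by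
        ext ω
        simp only [Set.mem_setOf_eq, Set.mem_empty_iff_false, iff_false, zero_mul, not_and]
        intro h; linarith
      have hs2 : {ω | x < (0:ℝ) * Z 0 ω ∧ (0:ℝ) * Zt s 0 ω ≤ x} = (∅ : Set Ω) := by
        ext ω
        simp only [Set.mem_setOf_eq, Set.mem_empty_iff_false, iff_false, zero_mul, not_and]
        intro h; linarith
      rw [hs1, hs2]
      simp only [measure_empty, ENNReal.toReal_zero, max_self, zero_div]
      rw [if_pos (by norm_num : |(0:ℝ)| ≤ 1), abs_zero, zero_rpow hγ0.ne', zero_add, mul_one]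
      exact hKnn
    · have hay : 0 < |y| := abs_pos.2 hy
      have hu : xt s ≤ x / |y| := by
        rw [le_div_iff₀ hay]
        calc xt s * |y| = |y| * xt s := mul_comm _ _
          _ ≤ (x / xt s) * xt s := mul_le_mul_of_nonneg_right hyb hxtpos.le
          _ = x := div_mul_cancel₀ x hxtpos.ne'
      obtain ⟨b1, b2, b3, b4, b5⟩ := (hxt s).2 _ hu
      have hx₀u : x₀ ≤ x / |y| := le_trans (hxt s).1 hu
      have hGu : (0:ℝ) < (ℙ {ω | x / |y| < Z 0 ω}).toReal := hGpos (x/|y|)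
      have hGmu : (0:ℝ) < (ℙ {ω | Z 0 ω < -(x/|y|)}).toReal := hGmpos (x/|y|)
      -- coefficient inequalities
      have hf1 := hLpleCp s
      have hf2 := hLple1 s
      have hf3 := hLmleCm s
      have hf4 := hLmle1 s
      have hf5 := hεpos s
      set kk : ℝ := (q+1) * ((Cp s - Lp s) + (1 - Lp s) + (Cm s - Lm s) + (1 - Lm s)
        + 2 * ε s) with hkkdef
      have hkknn : 0 ≤ kk := by
        rw [hkkdef]
        exact mul_nonneg (by linarith) (by linarith)
      have hc1 : Cp s - Lp s + 2 * ε s ≤ kk := by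
        rw [hkkdef]
        nlinarith [mul_nonneg hq0 (by linarith : (0:ℝ) ≤ (Cp s - Lp s) + (1 - Lp s) +
          (Cm s - Lm s) + (1 - Lm s) + 2 * ε s)]
      have hc2 : 1 - Lp s + ε s ≤ kk := by
        rw [hkkdef]
        nlinarith [mul_nonneg hq0 (by linarith : (0:ℝ) ≤ (Cp s - Lp s) + (1 - Lp s) +
          (Cm s - Lm s) + (1 - Lm s) + 2 * ε s)]
      have hc3 : (Cm s - Lm s + 2 * ε s) * (q+1) ≤ kk := by
        rw [hkkdef]
        nlinarith [mul_nonneg (by linarith : (0:ℝ) ≤ q + 1)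
          (by linarith : (0:ℝ) ≤ (Cp s - Lp s) + (1 - Lp s) + (1 - Lm s))]
      have hc4 : (1 - Lm s + ε s) * (q+1) ≤ kk := by
        rw [hkkdef]
        nlinarith [mul_nonneg (by linarith : (0:ℝ) ≤ q + 1)
          (by linarith : (0:ℝ) ≤ (Cp s - Lp s) + (1 - Lp s) + (Cm s - Lm s) + ε s)]
      -- numerator bound
      have hnum : max (ℙ {ω | x < y * Zt s 0 ω ∧ y * Z 0 ω ≤ x}).toReal
          (ℙ {ω | x < y * Z 0 ω ∧ y * Zt s 0 ω ≤ x}).toReal ≤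
          kk * (ℙ {ω | x / |y| < Z 0 ω}).toReal := by
        rcases hy.lt_or_gt with hneg | hpos
        · have habs : |y| = -y := abs_of_neg hneg
          have hiff1 : ∀ z : ℝ, x < y * z ↔ z < -(x/|y|) := by
            intro z
            rw [habs, div_neg, neg_neg, lt_div_iff_of_neg hneg, mul_comm]
          have hiff2 : ∀ z : ℝ, y * z ≤ x ↔ -(x/|y|) ≤ z := by
            intro z
            rw [habs, div_neg, neg_neg, div_le_iff_of_neg hneg, mul_comm]
          have hA : {ω | x < y * Zt s 0 ω ∧ y * Z 0 ω ≤ x}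
              = {ω | Zt s 0 ω < -(x/|y|)} \ {ω | Z 0 ω < -(x/|y|)} := by
            ext ω
            simp only [Set.mem_setOf_eq, Set.mem_diff, hiff1, hiff2, not_lt]
          have hB : {ω | x < y * Z 0 ω ∧ y * Zt s 0 ω ≤ x}
              = {ω | Z 0 ω < -(x/|y|)} \ {ω | Zt s 0 ω < -(x/|y|)} := by
            ext ω
            simp only [Set.mem_setOf_eq, Set.mem_diff, hiff1, hiff2, not_lt]
          rw [hA, hB, hdiff _ _ (measurableSet_lt hZmeas measurable_const),
            hdiff _ _ (measurableSet_lt (hZtmeas s) measurable_const),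
            Set.inter_comm {ω | Z 0 ω < -(x/|y|)} {ω | Zt s 0 ω < -(x/|y|)}]
          rw [show {ω | Zt s 0 ω < -(x/|y|)} ∩ {ω | Z 0 ω < -(x/|y|)}
            = {ω | Zt s 0 ω < -(x/|y|) ∧ Z 0 ω < -(x/|y|)} from (Set.setOf_and).symm]
          refine max_le ?_ ?_
          · calc (ℙ {ω | Zt s 0 ω < -(x/|y|)}).toReal -
                (ℙ {ω | Zt s 0 ω < -(x/|y|) ∧ Z 0 ω < -(x/|y|)}).toReal
                ≤ (Cm s + ε s) * (ℙ {ω | Z 0 ω < -(x/|y|)}).toReal -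
                  (Lm s - ε s) * (ℙ {ω | Z 0 ω < -(x/|y|)}).toReal := by
                  have hb2 := b2; have hb4 := b4; linarith
              _ = (Cm s - Lm s + 2 * ε s) * (ℙ {ω | Z 0 ω < -(x/|y|)}).toReal := by ring
              _ ≤ (Cm s - Lm s + 2 * ε s) * ((q+1) * (ℙ {ω | x / |y| < Z 0 ω}).toReal) :=
                  mul_le_mul_of_nonneg_left b5 (by linarith)
              _ = ((Cm s - Lm s + 2 * ε s) * (q+1)) * (ℙ {ω | x / |y| < Z 0 ω}).toReal := by
                  ring
              _ ≤ kk * (ℙ {ω | x / |y| < Z 0 ω}).toReal :=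
                  mul_le_mul_of_nonneg_right hc3 hGu.le
          · calc (ℙ {ω | Z 0 ω < -(x/|y|)}).toReal -
                (ℙ {ω | Zt s 0 ω < -(x/|y|) ∧ Z 0 ω < -(x/|y|)}).toReal
                ≤ (ℙ {ω | Z 0 ω < -(x/|y|)}).toReal -
                  (Lm s - ε s) * (ℙ {ω | Z 0 ω < -(x/|y|)}).toReal := by linarith [b4]
              _ = (1 - Lm s + ε s) * (ℙ {ω | Z 0 ω < -(x/|y|)}).toReal := by ring
              _ ≤ (1 - Lm s + ε s) * ((q+1) * (ℙ {ω | x / |y| < Z 0 ω}).toReal) :=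
                  mul_le_mul_of_nonneg_left b5 (by linarith)
              _ = ((1 - Lm s + ε s) * (q+1)) * (ℙ {ω | x / |y| < Z 0 ω}).toReal := by ring
              _ ≤ kk * (ℙ {ω | x / |y| < Z 0 ω}).toReal :=
                  mul_le_mul_of_nonneg_right hc4 hGu.le
        · have habs : |y| = y := abs_of_pos hpos
          have hiff1 : ∀ z : ℝ, x < y * z ↔ x/|y| < z := by
            intro z
            rw [habs, div_lt_iff₀ hpos, mul_comm]
          have hiff2 : ∀ z : ℝ, y * z ≤ x ↔ z ≤ x/|y| := by
            intro z
            rw [habs, le_div_iff₀ hpos, mul_comm]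
          have hA : {ω | x < y * Zt s 0 ω ∧ y * Z 0 ω ≤ x}
              = {ω | x/|y| < Zt s 0 ω} \ {ω | x/|y| < Z 0 ω} := by
            ext ω
            simp only [Set.mem_setOf_eq, Set.mem_diff, hiff1, hiff2, not_lt]
          have hB : {ω | x < y * Z 0 ω ∧ y * Zt s 0 ω ≤ x}
              = {ω | x/|y| < Z 0 ω} \ {ω | x/|y| < Zt s 0 ω} := by
            ext ω
            simp only [Set.mem_setOf_eq, Set.mem_diff, hiff1, hiff2, not_lt]
          rw [hA, hB, hdiff _ _ (measurableSet_lt measurable_const hZmeas),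
            hdiff _ _ (measurableSet_lt measurable_const (hZtmeas s)),
            Set.inter_comm {ω | x/|y| < Z 0 ω} {ω | x/|y| < Zt s 0 ω}]
          rw [show {ω | x/|y| < Zt s 0 ω} ∩ {ω | x/|y| < Z 0 ω}
            = {ω | x/|y| < Zt s 0 ω ∧ x/|y| < Z 0 ω} from (Set.setOf_and).symm]
          refine max_le ?_ ?_
          · calc (ℙ {ω | x/|y| < Zt s 0 ω}).toReal -
                (ℙ {ω | x/|y| < Zt s 0 ω ∧ x/|y| < Z 0 ω}).toReal
                ≤ (Cp s + ε s) * (ℙ {ω | x/|y| < Z 0 ω}).toReal -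
                  (Lp s - ε s) * (ℙ {ω | x/|y| < Z 0 ω}).toReal := by linarith [b1, b3]
              _ = (Cp s - Lp s + 2 * ε s) * (ℙ {ω | x/|y| < Z 0 ω}).toReal := by ring
              _ ≤ kk * (ℙ {ω | x / |y| < Z 0 ω}).toReal :=
                  mul_le_mul_of_nonneg_right hc1 hGu.le
          · calc (ℙ {ω | x/|y| < Z 0 ω}).toReal -
                (ℙ {ω | x/|y| < Zt s 0 ω ∧ x/|y| < Z 0 ω}).toReal
                ≤ (ℙ {ω | x/|y| < Z 0 ω}).toReal -
                  (Lp s - ε s) * (ℙ {ω | x/|y| < Z 0 ω}).toReal := by linarith [b3]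
              _ = (1 - Lp s + ε s) * (ℙ {ω | x/|y| < Z 0 ω}).toReal := by ring
              _ ≤ kk * (ℙ {ω | x / |y| < Z 0 ω}).toReal :=
                  mul_le_mul_of_nonneg_right hc2 hGu.le
      -- conclude
      have hKkk : (2:ℝ)^γ * kk ≤ K s := by
        have h1 : K₀ s = (2:ℝ)^γ * kk := by rw [hK₀def, hkkdef]
        rw [← h1]
        exact hKge s
      have hyγnn : (0:ℝ) ≤ |y|^γ := rpow_nonneg (abs_nonneg y) γ
      by_cases hy1 : |y| ≤ 1
      · rw [if_pos hy1, div_le_iff₀ hGx]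
        have hxu : x ≤ x / |y| := by
          rw [le_div_iff₀ hay]
          nlinarith
        have hstep : (ℙ {ω | x / |y| < Z 0 ω}).toReal ≤ (ℙ {ω | x < Z 0 ω}).toReal :=
          hGanti hxu
        refine le_trans (le_trans hnum (mul_le_mul_of_nonneg_left hstep hkknn)) ?_
        have h1 : kk ≤ K s := by
          have hh : kk ≤ (2:ℝ)^γ * kk := by
            nlinarith [mul_nonneg (sub_nonneg.2 h2γ1) hkknn]
          linarith
        have h2 : K s * (ℙ {ω | x < Z 0 ω}).toReal ≤
            K s * (|y|^γ + 1) * (ℙ {ω | x < Z 0 ω}).toReal := by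
          nlinarith [mul_nonneg (mul_nonneg hKnn hyγnn) hGx.le]
        nlinarith
      · rw [if_neg hy1, div_le_iff₀ hGx]
        push_neg at hy1
        have hux : x / |y| ≤ x := by
          rw [div_le_iff₀ hay]
          nlinarith
        have hpot : (ℙ {ω | x / |y| < Z 0 ω}).toReal ≤
            (2:ℝ)^γ * (x/(x/|y|))^γ * (ℙ {ω | x < Z 0 ω}).toReal :=
          hPotter (x/|y|) x hx₀u hux
        rw [div_div_cancel₀ hx0.ne'] at hpot
        refine le_trans (le_trans hnum (mul_le_mul_of_nonneg_left hpot hkknn)) ?_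
        rw [add_zero]
        have h3 := mul_le_mul_of_nonneg_right hKkk (mul_nonneg hyγnn hGx.le)
        nlinarith

end SVF
end

section
/- Under Assumptions 1 and 2, with a_n chosen so that |D_n|·P(Z_0 > a_n) → 1, for every t ∈ ℕ, K ∈ ℕ, x > 0 and every deterministic field (y_v)_{v∈ℤ^d}: lim_{m→∞} limsup_{n→∞} Σ_{v∈D_n} P( max_{u∈A_v^n∖A_v^{(m)}} |f^K(y_u) Z_u^t| > a_n x, |f^K(y_v) Z_v^t| > a_n x ) = 0, where f^K(y) = y·1{|y| ≤ K}. -/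
open MeasureTheory Filter Real

namespace SVF

variable {d : ℕ} {Ω : Type*}

section Aux

lemma abs_trunc_le (K : ℕ) (z : ℝ) : |trunc K z| ≤ K := by
  unfold trunc
  split
  · assumption
  · simp

lemma trunc_zero' (z : ℝ) : trunc 0 z = 0 := by
  unfold trunc
  split
  · next h =>
    simp only [Nat.cast_zero] at h
    exact abs_eq_zero.mp (le_antisymm h (abs_nonneg z))
  · rfl

lemma Bm_zero : Bm d 0 = {0} := by
  unfold Bm
  have h1 : (fun _ : Fin d => -((0:ℕ) : ℤ)) = (0 : V d) := by funext ℓ; simp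
  have h2 : (fun _ : Fin d => ((0:ℕ) : ℤ)) = (0 : V d) := by funext ℓ; simp
  rw [h1, h2, Finset.Icc_self]

lemma fMax_singleton (v : V d) (f : V d → ℝ) : fMax {v} f = f v := by
  unfold fMax
  rw [Finset.coe_singleton, Set.image_singleton, csSup_singleton]

lemma normRm_zero (R : V d → Ω → ℝ) (ω : Ω) : normRm R 0 ω = |R 0 ω| := by
  unfold normRm
  rw [Bm_zero, fMax_singleton]

lemma prec_translate (ord : TransOrder d) (v u : V d) :
    ord.prec v (u + v) ↔ ord.prec 0 u := by
  constructor
  · intro h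
    have h2 := ord.invariant v (u + v) (-v) h
    simpa using h2
  · intro h
    have h2 := ord.invariant 0 u v h
    simpa using h2

lemma mem_diff_translate (t : ℕ → Fin d → ℕ) (ord : TransOrder d) (n m : ℕ) (v u : V d) :
    u ∈ Aball t ord.prec n v \ Am ord.prec m v ↔
      u - v ∈ Aball t ord.prec n 0 \ Am ord.prec m 0 := by
  have hprec : ord.prec v u ↔ ord.prec 0 (u - v) := by
    have := prec_translate ord v (u - v)
    rw [sub_add_cancel] at this
    exact this
  simp only [Finset.mem_sdiff, Aball, Am, Finset.mem_filter, Finset.mem_Icc, Pi.le_def,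
    Pi.sub_apply, Pi.zero_apply]
  constructor
  · rintro ⟨⟨⟨h1, h2⟩, h3⟩, h4⟩
    refine ⟨⟨⟨fun ℓ => by have := h1 ℓ; simp at this ⊢; omega,
      fun ℓ => by have := h2 ℓ; simp at this ⊢; omega⟩, hprec.1 h3⟩, fun hc => h4 ?_⟩
    obtain ⟨⟨hc1, hc2⟩, hc3⟩ := hc
    exact ⟨⟨fun ℓ => by have := hc1 ℓ; simp at this ⊢; omega,
      fun ℓ => by have := hc2 ℓ; simp at this ⊢; omega⟩, hprec.2 hc3⟩
  · rintro ⟨⟨⟨h1, h2⟩, h3⟩, h4⟩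
    refine ⟨⟨⟨fun ℓ => by have := h1 ℓ; simp at this ⊢; omega,
      fun ℓ => by have := h2 ℓ; simp at this ⊢; omega⟩, hprec.2 h3⟩, fun hc => h4 ?_⟩
    obtain ⟨⟨hc1, hc2⟩, hc3⟩ := hc
    exact ⟨⟨fun ℓ => by have := hc1 ℓ; simp at this ⊢; omega,
      fun ℓ => by have := hc2 ℓ; simp at this ⊢; omega⟩, hprec.1 hc3⟩

lemma shift_prob [MeasurableSpace Ω] (ℙ : Measure Ω) (R : V d → Ω → ℝ)
    (hstat : Stationary R ℙ) (S₀ : Finset (V d)) (th : ℝ) (v : V d) :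
    ℙ {ω | (∃ u ∈ S₀, th < |R (u + v) ω|) ∧ th < |R (0 + v) ω|} =
    ℙ {ω | (∃ u ∈ S₀, th < |R u ω|) ∧ th < |R 0 ω|} := by
  obtain ⟨hmeas, hshift⟩ := hstat
  set G : Set (Path d) := {g | (∃ u ∈ S₀, th < |g u|) ∧ th < |g 0|} with hGdef
  have h1 : ∀ u : V d, MeasurableSet {g : Path d | th < |g u|} := fun u =>
    measurableSet_lt measurable_const (measurable_pi_apply u).abs
  have hG : MeasurableSet G := by
    have hEq : G = (⋃ u ∈ S₀, {g : Path d | th < |g u|}) ∩ {g : Path d | th < |g 0|} := by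
      ext g; simp [hGdef]
    rw [hEq]
    exact (MeasurableSet.biUnion S₀.countable_toSet fun u _ => h1 u).inter (h1 0)
  have hΦv : Measurable (fun ω => fun z : V d => R (z + v) ω) :=
    measurable_pi_lambda _ fun z => hmeas (z + v)
  have hΦ : Measurable (fun ω => fun z : V d => R z ω) :=
    measurable_pi_lambda _ fun z => hmeas z
  have e1 : {ω | (∃ u ∈ S₀, th < |R (u + v) ω|) ∧ th < |R (0 + v) ω|}
      = (fun ω => fun z : V d => R (z + v) ω) ⁻¹' G := rfl
  have e2 : {ω | (∃ u ∈ S₀, th < |R u ω|) ∧ th < |R 0 ω|}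
      = (fun ω => fun z : V d => R z ω) ⁻¹' G := rfl
  rw [e1, e2, ← Measure.map_apply hΦv hG, ← Measure.map_apply hΦ hG, hshift v]

lemma onedim_rv [MeasurableSpace Ω] (ℙ : Measure Ω) [IsProbabilityMeasure ℙ]
    (R : V d → Ω → ℝ) (α : ℝ) (Θ : ℕ → Ω → V d → ℝ)
    (hR : RegVarWith R α Θ ℙ) (hmeas : Measurable (R 0)) (κ : ℝ) (hκ : 0 < κ) :
    Tendsto (fun u : ℝ => (ℙ {ω | κ * u < |R 0 ω|}).toReal / (ℙ {ω | u < |R 0 ω|}).toReal)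
      atTop (nhds (κ ^ (-α))) := by
  obtain ⟨-, -, hconv⟩ := hR 0
  have h := hconv κ hκ (fun _ => (1:ℝ)) continuous_const ⟨1, fun _ => by norm_num⟩
    (fun _ _ _ => rfl)
  have hint : ∫ ω, (fun _ : Path d => (1:ℝ)) (Θ 0 ω) ∂ℙ = 1 := by simp
  rw [hint, mul_one] at h
  refine h.congr fun u => ?_
  have hnorm : ∀ ω, normRm R 0 ω = |R 0 ω| := fun ω => normRm_zero R ω
  have hmS : MeasurableSet {ω' : Ω | κ * u < normRm R 0 ω'} := by
    have : {ω' : Ω | κ * u < normRm R 0 ω'} = {ω' | κ * u < |R 0 ω'|} := by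
      ext ω'; rw [Set.mem_setOf_eq, Set.mem_setOf_eq, hnorm]
    rw [this]
    exact measurableSet_lt measurable_const hmeas.abs
  have hset1 : {ω' : Ω | κ * u < normRm R 0 ω'} = {ω' | κ * u < |R 0 ω'|} := by
    ext ω'; rw [Set.mem_setOf_eq, Set.mem_setOf_eq, hnorm]
  have hset2 : {ω' : Ω | u < normRm R 0 ω'} = {ω' | u < |R 0 ω'|} := by
    ext ω'; rw [Set.mem_setOf_eq, Set.mem_setOf_eq, hnorm]
  rw [integral_indicator_const (1:ℝ) hmS, hset1, hset2]
  simp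
  rfl

lemma mul_ratio_le (c pf pd : ℝ) (hpf : 0 ≤ pf) (hle : pf ≤ pd) :
    c * pf ≤ c * pd * (pf / pd) := by
  rcases eq_or_lt_of_le (hpf.trans hle) with h0 | hpos
  · have hpf0 : pf = 0 := le_antisymm (hle.trans h0.symm.le) hpf
    simp [hpf0]
  · rw [mul_assoc, mul_comm pd, div_mul_cancel₀ _ (ne_of_gt hpos)]

end Aux
/-- **Lemma 5.3** (conditional anti-clustering for the truncated volatility field). -/
theorem statement_9 [MeasurableSpace Ω] (ℙ : Measure Ω) [IsProbabilityMeasure ℙ]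
    (D : ℕ → Finset (V d)) (t : ℕ → Fin d → ℕ) (xs : ℕ → Fin d → ℝ) (ord : TransOrder d)
    (Z : V d → Ω → ℝ) (Zt : ℕ → V d → Ω → ℝ) (Θ : ℕ → ℕ → Ω → V d → ℝ)
    (Y : V d → Ω → ℝ) (α γ p : ℝ) (a : ℕ → ℝ)
    (hIdx : IndexAssumption D t xs)
    (hZ : ZAssumption ℙ (fun n => ((D n).card : ℝ)) t ord Z Zt Θ α p)
    (hY : YAssumption ℙ Y Z Zt Θ α γ)
    (ha : Tendsto (fun n => ((D n).card : ℝ) * (ℙ {ω | a n < Z 0 ω}).toReal) atTop (nhds 1)) :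
    ∀ s K : ℕ, ∀ x : ℝ, 0 < x → ∀ y : Path d,
      Tendsto (fun m => Filter.limsup (fun n => ∑ v ∈ D n,
          (ℙ {ω | (∃ u ∈ Aball t ord.prec n v \ Am ord.prec m v,
                a n * x < |trunc K (y u) * Zt s u ω|) ∧
              a n * x < |trunc K (y v) * Zt s v ω|}).toReal) atTop)
        atTop (nhds 0) := by
  intro s K x hx y
  classical
  obtain ⟨Cp, Cm, hCpCm, hCp1, hCm1⟩ := hZ.tails
  obtain ⟨hCpPos, hCmPos, hg1, hg2⟩ := hCpCm s
  have hg3 := hZ.tail_balance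
  have hZmeas : Measurable (Z 0) := hZ.Zstat.1 0
  have hTmeas : Measurable (Zt s 0) := (hZ.Ztstat s).1 0
  -- positivity of the upper tail of `Z 0`
  have hPZpos : ∀ M : ℝ, 0 < (ℙ {ω | M < Z 0 ω}).toReal := by
    have hev : ∀ᶠ u : ℝ in atTop,
        Cp s / 2 < (ℙ {ω | u < Zt s 0 ω}).toReal / (ℙ {ω | u < Z 0 ω}).toReal :=
      hg1.eventually (eventually_gt_nhds (by linarith))
    obtain ⟨u₀, hu₀⟩ := eventually_atTop.1 hev
    intro M
    have h1 : 0 < (ℙ {ω | max M u₀ < Z 0 ω}).toReal := by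
      by_contra h
      have hz : (ℙ {ω | max M u₀ < Z 0 ω}).toReal = 0 :=
        le_antisymm (not_lt.1 h) ENNReal.toReal_nonneg
      have h2 := hu₀ (max M u₀) (le_max_right _ _)
      rw [hz, div_zero] at h2
      linarith
    refine lt_of_lt_of_le h1 (ENNReal.toReal_mono (measure_ne_top ℙ _) (measure_mono ?_))
    intro ω h
    simp only [Set.mem_setOf_eq] at h ⊢
    exact lt_of_le_of_lt (le_max_left _ _) h
  -- eventual positivity of the other tails
  have hPTpos : ∀ᶠ u : ℝ in atTop, 0 < (ℙ {ω | u < Zt s 0 ω}).toReal := by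
    filter_upwards [hg1.eventually (eventually_gt_nhds (by linarith : Cp s / 2 < Cp s))] with u hu
    by_contra h
    rw [le_antisymm (not_lt.1 h) ENNReal.toReal_nonneg, zero_div] at hu
    linarith
  have hPZnpos : ∀ᶠ u : ℝ in atTop, 0 < (ℙ {ω | Z 0 ω < -u}).toReal := by
    filter_upwards [hg2.eventually (eventually_gt_nhds (by linarith : Cm s / 2 < Cm s))] with u hu
    by_contra h
    rw [le_antisymm (not_lt.1 h) ENNReal.toReal_nonneg, div_zero] at hu
    linarith
  have hPAposEv : ∀ᶠ u : ℝ in atTop, 0 < (ℙ {ω | u < |Zt s 0 ω|}).toReal := by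
    filter_upwards [hPTpos] with u hu
    refine lt_of_lt_of_le hu (ENNReal.toReal_mono (measure_ne_top ℙ _) (measure_mono ?_))
    intro ω h
    simp only [Set.mem_setOf_eq] at h ⊢
    exact lt_of_lt_of_le h (le_abs_self _)
  -- `|D n| → ∞`
  have hDpos : ∀ᶠ n in atTop, 0 < ((D n).card : ℝ) := by
    filter_upwards [ha.eventually (eventually_gt_nhds (by norm_num : (1:ℝ)/2 < 1))] with n hn
    by_contra h
    rw [le_antisymm (not_lt.1 h) (by positivity), zero_mul] at hn
    linarith
  have hDtop : Tendsto (fun n => ((D n).card : ℝ)) atTop atTop := by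
    have hprod1 : ∀ n, (1:ℝ) ≤ ∏ ℓ, (t n ℓ : ℝ) := by
      intro n
      have h := Finset.prod_le_prod (s := Finset.univ) (f := fun _ : Fin d => (1:ℝ))
        (g := fun ℓ => (t n ℓ : ℝ)) (fun _ _ => zero_le_one)
        (fun ℓ _ => Nat.one_le_cast.mpr (hIdx.t_pos n ℓ))
      simpa using h
    have hinv0 : Tendsto (fun n => ((D n).card : ℝ)⁻¹) atTop (nhds 0) := by
      refine tendsto_of_tendsto_of_tendsto_of_le_of_le' tendsto_const_nhds hIdx.small
        (Eventually.of_forall fun n => by positivity) ?_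
      filter_upwards [hDpos] with n hn
      rw [inv_eq_one_div]
      gcongr
      exact hprod1 n
    have hinvpos : ∀ᶠ n in atTop, ((D n).card : ℝ)⁻¹ ∈ Set.Ioi (0:ℝ) := by
      filter_upwards [hDpos] with n hn
      exact inv_pos.mpr hn
    have h2 : Tendsto (fun n => (((D n).card : ℝ)⁻¹)⁻¹) atTop atTop :=
      tendsto_inv_nhdsGT_zero.comp
        (tendsto_nhdsWithin_of_tendsto_nhds_of_eventually_within _ hinv0 hinvpos)
    exact h2.congr fun n => inv_inv _
  -- `a n → ∞`
  have haTop : Tendsto a atTop atTop := by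
    by_contra hcon
    rw [tendsto_atTop] at hcon
    push_neg at hcon
    obtain ⟨b, hb⟩ := hcon
    have hδ : 0 < (ℙ {ω | b < Z 0 ω}).toReal := hPZpos b
    have hev : ∀ᶠ n in atTop,
        ((D n).card : ℝ) * (ℙ {ω | a n < Z 0 ω}).toReal < 2 ∧
        2 / (ℙ {ω | b < Z 0 ω}).toReal < ((D n).card : ℝ) :=
      (ha.eventually (eventually_lt_nhds one_lt_two)).and (hDtop.eventually_gt_atTop _)
    obtain ⟨n, hn1, hn2, hn3⟩ := (hb.and_eventually hev).exists
    have hmono : (ℙ {ω | b < Z 0 ω}).toReal ≤ (ℙ {ω | a n < Z 0 ω}).toReal :=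
      ENNReal.toReal_mono (measure_ne_top ℙ _)
        (measure_mono fun ω h => lt_trans hn1 h)
    have hcard : 0 < ((D n).card : ℝ) := lt_trans (by positivity) hn3
    have h4 : (2:ℝ) < ((D n).card : ℝ) * (ℙ {ω | b < Z 0 ω}).toReal := (div_lt_iff₀ hδ).1 hn3
    nlinarith [mul_le_mul_of_nonneg_left hmono hcard.le]
  rcases Nat.eq_zero_or_pos K with hK0 | hKpos
  · -- trivial case `K = 0`
    subst hK0
    have h0 : ∀ (m n : ℕ) (v : V d), 0 ≤ a n →
        (ℙ {ω | (∃ u ∈ Aball t ord.prec n v \ Am ord.prec m v,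
              a n * x < |trunc 0 (y u) * Zt s u ω|) ∧
            a n * x < |trunc 0 (y v) * Zt s v ω|}) = 0 := by
      intro m n v hn
      refine measure_mono_null ?_ measure_empty
      rintro ω ⟨-, h2⟩
      rw [trunc_zero', zero_mul, abs_zero] at h2
      exact absurd h2 (not_lt.mpr (mul_nonneg hn hx.le))
    refine Tendsto.congr' ?_ (tendsto_const_nhds (x := (0:ℝ)))
    refine Eventually.of_forall fun m => ?_
    refine ((Filter.limsup_congr ?_).trans (Filter.limsup_const (0:ℝ))).symm
    filter_upwards [haTop.eventually_ge_atTop 0] with n hn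
    refine Finset.sum_eq_zero fun v _ => ?_
    rw [h0 m n v hn]
    simp
  · -- main case `K ≥ 1`
    have hK : (0:ℝ) < (K:ℝ) := by exact_mod_cast hKpos
    have hαne : α ≠ 0 := ne_of_gt hZ.alpha_pos
    set κ : ℝ := (Cp s) ^ ((1:ℝ)/α) with hκdef
    have hκ : 0 < κ := Real.rpow_pos_of_pos hCpPos _
    have hκα : κ ^ (-α) = (Cp s)⁻¹ := by
      rw [hκdef, ← Real.rpow_mul hCpPos.le,
        show (1/α) * (-α) = (-1:ℝ) by field_simp, Real.rpow_neg_one]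
    have hp0 : 0 < p := hZ.p_mem.1
    have hp1 : p ≤ 1 := hZ.p_mem.2
    set L : ℝ := Cp s + Cm s * ((1 - p)/p) with hLdef
    have hLpos : 0 < L := by
      have h1 : 0 ≤ Cm s * ((1 - p)/p) :=
        mul_nonneg hCmPos.le (div_nonneg (by linarith) hp0.le)
      rw [hLdef]; linarith
    have hadd : ∀ u : ℝ, 0 ≤ u → (ℙ {ω | u < |Zt s 0 ω|}).toReal =
        (ℙ {ω | u < Zt s 0 ω}).toReal + (ℙ {ω | Zt s 0 ω < -u}).toReal := by
      intro u hu
      have hset : {ω | u < |Zt s 0 ω|} = {ω | u < Zt s 0 ω} ∪ {ω | Zt s 0 ω < -u} := by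
        ext ω
        simp only [Set.mem_setOf_eq, Set.mem_union, lt_abs]
        constructor
        · rintro (h | h)
          · exact Or.inl h
          · exact Or.inr (by linarith)
        · rintro (h | h)
          · exact Or.inl h
          · exact Or.inr (by linarith)
      have hdisj : Disjoint {ω | u < Zt s 0 ω} {ω | Zt s 0 ω < -u} := by
        rw [Set.disjoint_left]
        intro ω h1 h2
        simp only [Set.mem_setOf_eq] at h1 h2
        linarith
      rw [hset, measure_union hdisj (measurableSet_lt hTmeas measurable_const)]
      exact ENNReal.toReal_add (measure_ne_top ℙ _) (measure_ne_top ℙ _)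
    have hL7 : Tendsto (fun u : ℝ => (ℙ {ω | u < |Zt s 0 ω|}).toReal /
        (ℙ {ω | u < Z 0 ω}).toReal) atTop (nhds L) := by
      have hcomb : Tendsto (fun u : ℝ =>
          (ℙ {ω | u < Zt s 0 ω}).toReal / (ℙ {ω | u < Z 0 ω}).toReal +
          ((ℙ {ω | Zt s 0 ω < -u}).toReal / (ℙ {ω | Z 0 ω < -u}).toReal) *
          ((ℙ {ω | Z 0 ω < -u}).toReal / (ℙ {ω | u < Z 0 ω}).toReal)) atTop (nhds L) := by
        rw [hLdef]
        exact hg1.add (hg2.mul hg3)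
      refine hcomb.congr' ?_
      filter_upwards [hPZnpos, eventually_ge_atTop (0:ℝ)] with u hZn hu
      have h1 : (ℙ {ω | Z 0 ω < -u}).toReal ≠ 0 := ne_of_gt hZn
      have h2 : (ℙ {ω | u < Z 0 ω}).toReal ≠ 0 := ne_of_gt (hPZpos u)
      rw [hadd u hu, add_div]
      congr 1
      field_simp
    have hL8 : Tendsto (fun u : ℝ => (ℙ {ω | u < Zt s 0 ω}).toReal /
        (ℙ {ω | u < |Zt s 0 ω|}).toReal) atTop (nhds (Cp s / L)) := by
      have hdiv := hg1.div hL7 (ne_of_gt hLpos)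
      refine hdiv.congr' ?_
      filter_upwards [hPAposEv] with u hPA
      have h2 : (ℙ {ω | u < Z 0 ω}).toReal ≠ 0 := ne_of_gt (hPZpos u)
      have h3 : (ℙ {ω | u < |Zt s 0 ω|}).toReal ≠ 0 := ne_of_gt hPA
      simp only [Pi.div_apply]
      field_simp
    have hRV : ∀ κ' : ℝ, 0 < κ' → Tendsto (fun u : ℝ =>
        (ℙ {ω | κ' * u < |Zt s 0 ω|}).toReal / (ℙ {ω | u < |Zt s 0 ω|}).toReal)
        atTop (nhds (κ' ^ (-α))) := fun κ' hκ' =>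
      onedim_rv ℙ (Zt s) α (Θ s) (hZ.regvar s) hTmeas κ' hκ'
    have hκa : Tendsto (fun n => κ * a n) atTop atTop :=
      Filter.Tendsto.const_mul_atTop hκ haTop
    have main1 : Tendsto (fun n => ((D n).card : ℝ) *
        (ℙ {ω | κ * a n < Zt s 0 ω}).toReal) atTop (nhds 1) := by
      have hfac : Tendsto (fun n =>
          ((((D n).card : ℝ) * (ℙ {ω | a n < Z 0 ω}).toReal) *
          ((ℙ {ω | a n < |Zt s 0 ω|}).toReal / (ℙ {ω | a n < Z 0 ω}).toReal)) *
          ((ℙ {ω | κ * a n < |Zt s 0 ω|}).toReal / (ℙ {ω | a n < |Zt s 0 ω|}).toReal) *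
          ((ℙ {ω | κ * a n < Zt s 0 ω}).toReal / (ℙ {ω | κ * a n < |Zt s 0 ω|}).toReal))
          atTop (nhds (((1 * L) * κ ^ (-α)) * (Cp s / L))) := by
        refine Tendsto.mul (Tendsto.mul (Tendsto.mul ?_ ?_) ?_) ?_
        · exact ha
        · exact hL7.comp haTop
        · exact (hRV κ hκ).comp haTop
        · exact hL8.comp hκa
      have hval : ((1 * L) * κ ^ (-α)) * (Cp s / L) = 1 := by
        rw [hκα]
        field_simp
      rw [hval] at hfac
      refine hfac.congr' ?_
      filter_upwards [haTop.eventually hPAposEv, hκa.eventually hPAposEv] with n h1 h2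
      have h3 : (ℙ {ω | a n < Z 0 ω}).toReal ≠ 0 := ne_of_gt (hPZpos (a n))
      have h4 : (ℙ {ω | a n < |Zt s 0 ω|}).toReal ≠ 0 := ne_of_gt h1
      have h5 : (ℙ {ω | κ * a n < |Zt s 0 ω|}).toReal ≠ 0 := ne_of_gt h2
      field_simp
      rw [mul_comm (a n) κ]
      field_simp
    have main2 : Tendsto (fun n => ((D n).card : ℝ) *
        (ℙ {ω | x / ((K:ℝ) * κ) * (κ * a n) < |Zt s 0 ω|}).toReal) atTop
        (nhds (L * (x / (K:ℝ)) ^ (-α))) := by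
      have hth : ∀ n, x / ((K:ℝ) * κ) * (κ * a n) = x / (K:ℝ) * a n := by
        intro n
        field_simp
      have hfac : Tendsto (fun n =>
          ((((D n).card : ℝ) * (ℙ {ω | a n < Z 0 ω}).toReal) *
          ((ℙ {ω | a n < |Zt s 0 ω|}).toReal / (ℙ {ω | a n < Z 0 ω}).toReal)) *
          ((ℙ {ω | x / (K:ℝ) * a n < |Zt s 0 ω|}).toReal / (ℙ {ω | a n < |Zt s 0 ω|}).toReal))
          atTop (nhds (((1 : ℝ) * L) * (x / (K:ℝ)) ^ (-α))) := by
        refine Tendsto.mul (Tendsto.mul ?_ ?_) ?_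
        · exact ha
        · exact hL7.comp haTop
        · exact (hRV _ (div_pos hx hK)).comp haTop
      rw [show ((1:ℝ) * L) * (x / (K:ℝ)) ^ (-α) = L * (x / (K:ℝ)) ^ (-α) by ring] at hfac
      refine hfac.congr' ?_
      filter_upwards [haTop.eventually hPAposEv] with n h1
      have h3 : (ℙ {ω | a n < Z 0 ω}).toReal ≠ 0 := ne_of_gt (hPZpos (a n))
      have h4 : (ℙ {ω | a n < |Zt s 0 ω|}).toReal ≠ 0 := ne_of_gt h1
      rw [hth n]
      field_simp
    set B : ℝ := L * (x / (K:ℝ)) ^ (-α) with hBdef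
    have hBpos : 0 < B := by
      rw [hBdef]
      exact mul_pos hLpos (Real.rpow_pos_of_pos (div_pos hx hK) _)
    have hB1 : (0:ℝ) < B + 1 := by linarith
    have hc : 0 < x / ((K:ℝ) * κ) := by positivity
    have hanti := hZ.anticluster s (fun n => κ * a n) main1 (x / ((K:ℝ) * κ)) hc
    -- the per-`(m,n)` bound
    have key : ∀ m n : ℕ,
        (∑ v ∈ D n, (ℙ {ω | (∃ u ∈ Aball t ord.prec n v \ Am ord.prec m v,
            a n * x < |trunc K (y u) * Zt s u ω|) ∧
            a n * x < |trunc K (y v) * Zt s v ω|}).toReal)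
        ≤ ((D n).card : ℝ) *
          (ℙ {ω | (∃ v ∈ Aball t ord.prec n 0 \ Am ord.prec m 0,
              x / ((K:ℝ) * κ) * (κ * a n) < |Zt s v ω|) ∧
              x / ((K:ℝ) * κ) * (κ * a n) < |Zt s 0 ω|}).toReal := by
      intro m n
      have hth : x / ((K:ℝ) * κ) * (κ * a n) = a n * x / (K:ℝ) := by
        field_simp
      have himp : ∀ (w : V d) (ω : Ω), a n * x < |trunc K (y w) * Zt s w ω| →
          x / ((K:ℝ) * κ) * (κ * a n) < |Zt s w ω| := by
        intro w ω hw
        have h1 : |trunc K (y w) * Zt s w ω| ≤ (K:ℝ) * |Zt s w ω| := by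
          rw [abs_mul]
          exact mul_le_mul_of_nonneg_right (abs_trunc_le K (y w)) (abs_nonneg _)
        rw [hth, div_lt_iff₀ hK]
        calc a n * x < (K:ℝ) * |Zt s w ω| := lt_of_lt_of_le hw h1
          _ = |Zt s w ω| * (K:ℝ) := mul_comm _ _
      have hperv : ∀ v : V d,
          (ℙ {ω | (∃ u ∈ Aball t ord.prec n v \ Am ord.prec m v,
              a n * x < |trunc K (y u) * Zt s u ω|) ∧
              a n * x < |trunc K (y v) * Zt s v ω|}).toReal
          ≤ (ℙ {ω | (∃ v' ∈ Aball t ord.prec n 0 \ Am ord.prec m 0,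
              x / ((K:ℝ) * κ) * (κ * a n) < |Zt s v' ω|) ∧
              x / ((K:ℝ) * κ) * (κ * a n) < |Zt s 0 ω|}).toReal := by
        intro v
        have hsub : {ω | (∃ u ∈ Aball t ord.prec n v \ Am ord.prec m v,
              a n * x < |trunc K (y u) * Zt s u ω|) ∧
              a n * x < |trunc K (y v) * Zt s v ω|}
            ⊆ {ω | (∃ u ∈ Aball t ord.prec n 0 \ Am ord.prec m 0,
              x / ((K:ℝ) * κ) * (κ * a n) < |Zt s (u + v) ω|) ∧
              x / ((K:ℝ) * κ) * (κ * a n) < |Zt s (0 + v) ω|} := by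
          rintro ω ⟨⟨u, hu, hlt⟩, hlt2⟩
          refine ⟨⟨u - v, (mem_diff_translate t ord n m v u).1 hu, ?_⟩, ?_⟩
          · have huv : u - v + v = u := by abel
            rw [huv]
            exact himp u ω hlt
          · rw [zero_add]
            exact himp v ω hlt2
        have hEq := shift_prob ℙ (Zt s) (hZ.Ztstat s)
          (Aball t ord.prec n 0 \ Am ord.prec m 0) (x / ((K:ℝ) * κ) * (κ * a n)) v
        refine le_trans (ENNReal.toReal_mono (measure_ne_top ℙ _)
          (le_trans (measure_mono hsub) (le_of_eq hEq))) (le_refl _)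
      have hsum := Finset.sum_le_sum (s := D n) (fun v _ => hperv v)
      rw [Finset.sum_const, nsmul_eq_mul] at hsum
      exact hsum
    -- ratio facts
    have hratio_le_one : ∀ m n : ℕ,
        (ℙ {ω | (∃ v ∈ Aball t ord.prec n 0 \ Am ord.prec m 0,
            x / ((K:ℝ) * κ) * (κ * a n) < |Zt s v ω|) ∧
            x / ((K:ℝ) * κ) * (κ * a n) < |Zt s 0 ω|}).toReal /
          (ℙ {ω | x / ((K:ℝ) * κ) * (κ * a n) < |Zt s 0 ω|}).toReal ≤ 1 := by
      intro m n
      refine div_le_one_of_le₀ (ENNReal.toReal_mono (measure_ne_top ℙ _)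
        (measure_mono fun ω h => h.2)) ENNReal.toReal_nonneg
    have r3 : ∀ m n : ℕ, ((D n).card : ℝ) *
        (ℙ {ω | (∃ v ∈ Aball t ord.prec n 0 \ Am ord.prec m 0,
            x / ((K:ℝ) * κ) * (κ * a n) < |Zt s v ω|) ∧
            x / ((K:ℝ) * κ) * (κ * a n) < |Zt s 0 ω|}).toReal ≤
        (((D n).card : ℝ) * (ℙ {ω | x / ((K:ℝ) * κ) * (κ * a n) < |Zt s 0 ω|}).toReal) *
        ((ℙ {ω | (∃ v ∈ Aball t ord.prec n 0 \ Am ord.prec m 0,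
            x / ((K:ℝ) * κ) * (κ * a n) < |Zt s v ω|) ∧
            x / ((K:ℝ) * κ) * (κ * a n) < |Zt s 0 ω|}).toReal /
          (ℙ {ω | x / ((K:ℝ) * κ) * (κ * a n) < |Zt s 0 ω|}).toReal) := by
      intro m n
      have hFD : (ℙ {ω | (∃ v ∈ Aball t ord.prec n 0 \ Am ord.prec m 0,
            x / ((K:ℝ) * κ) * (κ * a n) < |Zt s v ω|) ∧
            x / ((K:ℝ) * κ) * (κ * a n) < |Zt s 0 ω|}).toReal ≤
          (ℙ {ω | x / ((K:ℝ) * κ) * (κ * a n) < |Zt s 0 ω|}).toReal :=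
        ENNReal.toReal_mono (measure_ne_top ℙ _) (measure_mono fun ω h => h.2)
      exact mul_ratio_le _ _ _ ENNReal.toReal_nonneg hFD
    have r6 : ∀ᶠ n in atTop, ((D n).card : ℝ) *
        (ℙ {ω | x / ((K:ℝ) * κ) * (κ * a n) < |Zt s 0 ω|}).toReal ≤ B + 1 :=
      main2.eventually (eventually_le_nhds (lt_add_one B))
    -- final assembly
    refine Metric.tendsto_nhds.2 fun ε hε => ?_
    have hδ : 0 < ε / (2 * (B + 1)) := by positivity
    filter_upwards [(Metric.tendsto_nhds.1 hanti) (ε / (2 * (B + 1))) hδ] with m hm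
    rw [Real.dist_eq, sub_zero] at hm
    have hlimsuplt : Filter.limsup (fun n =>
        (ℙ {ω | (∃ v ∈ Aball t ord.prec n 0 \ Am ord.prec m 0,
            x / ((K:ℝ) * κ) * (κ * a n) < |Zt s v ω|) ∧
            x / ((K:ℝ) * κ) * (κ * a n) < |Zt s 0 ω|}).toReal /
          (ℙ {ω | x / ((K:ℝ) * κ) * (κ * a n) < |Zt s 0 ω|}).toReal) atTop
        < ε / (2 * (B + 1)) := lt_of_le_of_lt (le_abs_self _) hm
    have hbdd : IsBoundedUnder (· ≤ ·) atTop (fun n =>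
        (ℙ {ω | (∃ v ∈ Aball t ord.prec n 0 \ Am ord.prec m 0,
            x / ((K:ℝ) * κ) * (κ * a n) < |Zt s v ω|) ∧
            x / ((K:ℝ) * κ) * (κ * a n) < |Zt s 0 ω|}).toReal /
          (ℙ {ω | x / ((K:ℝ) * κ) * (κ * a n) < |Zt s 0 ω|}).toReal) :=
      ⟨1, eventually_map.2 (Eventually.of_forall (hratio_le_one m))⟩
    have hevr := eventually_lt_of_limsup_lt hlimsuplt hbdd
    have hevS : ∀ᶠ n in atTop, (∑ v ∈ D n,
        (ℙ {ω | (∃ u ∈ Aball t ord.prec n v \ Am ord.prec m v,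
            a n * x < |trunc K (y u) * Zt s u ω|) ∧
            a n * x < |trunc K (y v) * Zt s v ω|}).toReal) ≤
        (B + 1) * (ε / (2 * (B + 1))) := by
      filter_upwards [hevr, r6] with n h1 h6
      have hr0 : (0:ℝ) ≤
          (ℙ {ω | (∃ v ∈ Aball t ord.prec n 0 \ Am ord.prec m 0,
            x / ((K:ℝ) * κ) * (κ * a n) < |Zt s v ω|) ∧
            x / ((K:ℝ) * κ) * (κ * a n) < |Zt s 0 ω|}).toReal /
          (ℙ {ω | x / ((K:ℝ) * κ) * (κ * a n) < |Zt s 0 ω|}).toReal :=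
        div_nonneg ENNReal.toReal_nonneg ENNReal.toReal_nonneg
      calc (∑ v ∈ D n, (ℙ {ω | (∃ u ∈ Aball t ord.prec n v \ Am ord.prec m v,
              a n * x < |trunc K (y u) * Zt s u ω|) ∧
              a n * x < |trunc K (y v) * Zt s v ω|}).toReal)
          ≤ ((D n).card : ℝ) *
            (ℙ {ω | (∃ v ∈ Aball t ord.prec n 0 \ Am ord.prec m 0,
              x / ((K:ℝ) * κ) * (κ * a n) < |Zt s v ω|) ∧
              x / ((K:ℝ) * κ) * (κ * a n) < |Zt s 0 ω|}).toReal := key m n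
        _ ≤ (((D n).card : ℝ) * (ℙ {ω | x / ((K:ℝ) * κ) * (κ * a n) < |Zt s 0 ω|}).toReal) *
            ((ℙ {ω | (∃ v ∈ Aball t ord.prec n 0 \ Am ord.prec m 0,
              x / ((K:ℝ) * κ) * (κ * a n) < |Zt s v ω|) ∧
              x / ((K:ℝ) * κ) * (κ * a n) < |Zt s 0 ω|}).toReal /
              (ℙ {ω | x / ((K:ℝ) * κ) * (κ * a n) < |Zt s 0 ω|}).toReal) := r3 m n
        _ ≤ (B + 1) * ((ℙ {ω | (∃ v ∈ Aball t ord.prec n 0 \ Am ord.prec m 0,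
              x / ((K:ℝ) * κ) * (κ * a n) < |Zt s v ω|) ∧
              x / ((K:ℝ) * κ) * (κ * a n) < |Zt s 0 ω|}).toReal /
              (ℙ {ω | x / ((K:ℝ) * κ) * (κ * a n) < |Zt s 0 ω|}).toReal) :=
            mul_le_mul_of_nonneg_right h6 hr0
        _ ≤ (B + 1) * (ε / (2 * (B + 1))) := mul_le_mul_of_nonneg_left h1.le hB1.le
    have hcb : IsCoboundedUnder (· ≤ ·) atTop (fun n => ∑ v ∈ D n,
        (ℙ {ω | (∃ u ∈ Aball t ord.prec n v \ Am ord.prec m v,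
            a n * x < |trunc K (y u) * Zt s u ω|) ∧
            a n * x < |trunc K (y v) * Zt s v ω|}).toReal) :=
      isCoboundedUnder_le_of_le atTop (fun n =>
        Finset.sum_nonneg fun v _ => ENNReal.toReal_nonneg)
    have hFle := Filter.limsup_le_of_le hcb hevS
    have hFge : (0:ℝ) ≤ Filter.limsup (fun n => ∑ v ∈ D n,
        (ℙ {ω | (∃ u ∈ Aball t ord.prec n v \ Am ord.prec m v,
            a n * x < |trunc K (y u) * Zt s u ω|) ∧
            a n * x < |trunc K (y v) * Zt s v ω|}).toReal) atTop :=
      le_limsup_of_frequently_le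
        (Eventually.of_forall (fun n =>
          Finset.sum_nonneg fun v _ => ENNReal.toReal_nonneg)).frequently
        ⟨(B + 1) * (ε / (2 * (B + 1))), eventually_map.2 hevS⟩
    rw [Real.dist_eq, sub_zero, abs_of_nonneg hFge]
    have hhalf : (B + 1) * (ε / (2 * (B + 1))) = ε / 2 := by
      field_simp
    rw [hhalf] at hFle
    linarith
end SVF
end
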